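/- arXiv:1101.4144 — 4 statements merged into one kernel-verified Lean document; each statement's English description precedes it below -/
import Mathlib

section
/- Let W be a weak fundamental localizer and consider a square in Cat given by functors u : A → B, u' : A' → B', v : A' → A, w : B' → B between small categories and a natural transformation α : u ∘ v ⟶ w ∘ u'. The following conditions are equivalent: (a) for every object b' of B', the induced functor A'/b' → A/w(b') is W-coaspherical; (b) for every object a of A, the induced functor a\A' → u(a)\B' is W-aspherical; (c) for every object a of A, every object b' of B' and every morphism g : u(a) → w(b') in B, the category A'_{(a,b',g)} is W-aspherical. -/
open CategoryTheory

universe u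

namespace Paper

/-- A class of functors between small categories. -/
abbrev FunctorClass : Type (u + 1) :=
  ∀ ⦃A B : Type u⦄ [SmallCategory A] [SmallCategory B], (A ⥤ B) → Prop

/-- The punctual category `e`. -/
abbrev PtCat : Type u := Discrete PUnit.{u + 1}

/-- The category `A` is `W`-aspherical: the functor `A ⥤ e` lies in `W`. -/
def IsAsphericalCat (W : FunctorClass.{u}) (A : Type u) [SmallCategory A] : Prop :=
  W (Functor.star A)

/-- The functor `F : A ⥤ B` is `W`-aspherical: every comma category `A/b` is `W`-aspherical. -/
def IsAsphericalFunctor (W : FunctorClass.{u}) {A B : Type u} [SmallCategory A]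
    [SmallCategory B] (F : A ⥤ B) : Prop :=
  ∀ b : B, IsAsphericalCat W (CostructuredArrow F b)

/-- The functor `F : A ⥤ B` is `W`-coaspherical: every comma category `b\A` is `W`-aspherical. -/
def IsCoasphericalFunctor (W : FunctorClass.{u}) {A B : Type u} [SmallCategory A]
    [SmallCategory B] (F : A ⥤ B) : Prop :=
  ∀ b : B, IsAsphericalCat W (StructuredArrow b F)

/-- For `F : A ⥤ B` and `b : B`, the induced functor `A/b ⥤ B/b`. -/
def sliceInduced {A B : Type u} [SmallCategory A] [SmallCategory B] (F : A ⥤ B) (b : B) :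
    CostructuredArrow F b ⥤ Over b where
  obj x := Over.mk x.hom
  map {x y} f := Over.homMk (F.map f.left) (by simp [CostructuredArrow.w f])

/-- For a strictly commutative triangle given by `F : A ⥤ B`, `G : B ⥤ C` and `c : C`,
the induced functor `A/c ⥤ B/c`. -/
def triangleSlice {A B C : Type u} [SmallCategory A] [SmallCategory B] [SmallCategory C]
    (F : A ⥤ B) (G : B ⥤ C) (c : C) :
    CostructuredArrow (F ⋙ G) c ⥤ CostructuredArrow G c where
  obj x := CostructuredArrow.mk (Y := F.obj x.left) x.hom
  map {x y} f := CostructuredArrow.homMk (F.map f.left) (CostructuredArrow.w f)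

/-- For a strictly commutative triangle given by `F : A ⥤ B`, `G : B ⥤ C` and `c : C`,
the induced functor `c\A ⥤ c\B`. -/
def triangleCoslice {A B C : Type u} [SmallCategory A] [SmallCategory B] [SmallCategory C]
    (F : A ⥤ B) (G : B ⥤ C) (c : C) :
    StructuredArrow c (F ⋙ G) ⥤ StructuredArrow c G where
  obj x := StructuredArrow.mk (Y := F.obj x.right) x.hom
  map {x y} f := StructuredArrow.homMk (F.map f.right) (StructuredArrow.w f)


/-- `W` is a weak fundamental localizer. -/
structure IsWeakFundamentalLocalizer (W : FunctorClass.{u}) : Prop where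
  id_mem : ∀ (A : Type u) [SmallCategory A], W (𝟭 A)
  comp_mem : ∀ {A B C : Type u} [SmallCategory A] [SmallCategory B] [SmallCategory C]
      (F : A ⥤ B) (G : B ⥤ C), W F → W G → W (F ⋙ G)
  of_comp_left : ∀ {A B C : Type u} [SmallCategory A] [SmallCategory B] [SmallCategory C]
      (F : A ⥤ B) (G : B ⥤ C), W F → W (F ⋙ G) → W G
  of_comp_right : ∀ {A B C : Type u} [SmallCategory A] [SmallCategory B] [SmallCategory C]
      (F : A ⥤ B) (G : B ⥤ C), W G → W (F ⋙ G) → W F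
  retract_mem : ∀ {A A' : Type u} [SmallCategory A] [SmallCategory A']
      (i : A' ⥤ A) (r : A ⥤ A'), i ⋙ r = 𝟭 A' → W (r ⋙ i) → W r
  star_mem : ∀ (A : Type u) [SmallCategory A], Limits.HasTerminal A → W (Functor.star A)
  mem_of_slices : ∀ {A B : Type u} [SmallCategory A] [SmallCategory B] (F : A ⥤ B),
      (∀ b : B, W (sliceInduced F b)) → W F

/-- `W` is a fundamental localizer. -/
structure IsFundamentalLocalizer (W : FunctorClass.{u}) : Prop where
  id_mem : ∀ (A : Type u) [SmallCategory A], W (𝟭 A)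
  comp_mem : ∀ {A B C : Type u} [SmallCategory A] [SmallCategory B] [SmallCategory C]
      (F : A ⥤ B) (G : B ⥤ C), W F → W G → W (F ⋙ G)
  of_comp_left : ∀ {A B C : Type u} [SmallCategory A] [SmallCategory B] [SmallCategory C]
      (F : A ⥤ B) (G : B ⥤ C), W F → W (F ⋙ G) → W G
  of_comp_right : ∀ {A B C : Type u} [SmallCategory A] [SmallCategory B] [SmallCategory C]
      (F : A ⥤ B) (G : B ⥤ C), W G → W (F ⋙ G) → W F
  retract_mem : ∀ {A A' : Type u} [SmallCategory A] [SmallCategory A']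
      (i : A' ⥤ A) (r : A ⥤ A'), i ⋙ r = 𝟭 A' → W (r ⋙ i) → W r
  star_mem : ∀ (A : Type u) [SmallCategory A], Limits.HasTerminal A → W (Functor.star A)
  mem_of_rel_slices : ∀ {A B C : Type u} [SmallCategory A] [SmallCategory B] [SmallCategory C]
      (F : A ⥤ B) (G : B ⥤ C), (∀ c : C, W (triangleSlice F G c)) → W F


section Squares

variable {A A' B B' : Type u} [SmallCategory A] [SmallCategory A']
  [SmallCategory B] [SmallCategory B']

/-- The functor `A'/b' ⥤ A/w(b')` induced by a square `(u, u', v, w, α)`. -/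
def squareSlice (u : A ⥤ B) (u' : A' ⥤ B') (v : A' ⥤ A) (w : B' ⥤ B)
    (α : v ⋙ u ⟶ u' ⋙ w) (b' : B') :
    CostructuredArrow u' b' ⥤ CostructuredArrow u (w.obj b') where
  obj x := CostructuredArrow.mk (Y := v.obj x.left) (α.app x.left ≫ w.map x.hom)
  map {x y} f := CostructuredArrow.homMk (v.map f.left) (by
    have h := α.naturality f.left
    dsimp at h ⊢
    rw [← Category.assoc, h, Category.assoc, ← Functor.map_comp, CostructuredArrow.w f])

/-- The functor `a\A' ⥤ u(a)\B'` induced by a square `(u, u', v, w, α)`. -/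
def squareCoslice (u : A ⥤ B) (u' : A' ⥤ B') (v : A' ⥤ A) (w : B' ⥤ B)
    (α : v ⋙ u ⟶ u' ⋙ w) (a : A) :
    StructuredArrow a v ⥤ StructuredArrow (u.obj a) w where
  obj x := StructuredArrow.mk (Y := u'.obj x.right) (u.map x.hom ≫ α.app x.right)
  map {x y} f := StructuredArrow.homMk (u'.map f.right) (by
    have h := α.naturality f.right
    dsimp at h ⊢
    rw [Category.assoc, ← h, ← Category.assoc, ← Functor.map_comp, StructuredArrow.w f])

/-- The category `A'_{(a, b', g)}` attached to a square `(u, u', v, w, α)` and a triple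
`(a, b', g : u(a) ⟶ w(b'))`. -/
structure SquareFiber (u : A ⥤ B) (u' : A' ⥤ B') (v : A' ⥤ A) (w : B' ⥤ B)
    (α : v ⋙ u ⟶ u' ⋙ w) (a : A) (b' : B') (g : u.obj a ⟶ w.obj b') : Type u where
  pt : A'
  f : a ⟶ v.obj pt
  g' : u'.obj pt ⟶ b'
  fac : u.map f ≫ α.app pt ≫ w.map g' = g

instance (u : A ⥤ B) (u' : A' ⥤ B') (v : A' ⥤ A) (w : B' ⥤ B)
    (α : v ⋙ u ⟶ u' ⋙ w) (a : A) (b' : B') (g : u.obj a ⟶ w.obj b') :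
    Category (SquareFiber u u' v w α a b' g) where
  Hom x y := { h : x.pt ⟶ y.pt // x.f ≫ v.map h = y.f ∧ u'.map h ≫ y.g' = x.g' }
  id x := ⟨𝟙 x.pt, by simp, by simp⟩
  comp {x y z} f g := ⟨f.1 ≫ g.1, by
      rw [Functor.map_comp, ← Category.assoc, f.2.1, g.2.1], by
      rw [Functor.map_comp, Category.assoc, g.2.2, f.2.2]⟩
  id_comp f := by apply Subtype.ext; simp
  comp_id f := by apply Subtype.ext; simp
  assoc f g h := by apply Subtype.ext; simp

/-- A square `(u, u', v, w, α)` is `W`-exact. -/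
def IsExactSquare (W : FunctorClass.{u}) (u : A ⥤ B) (u' : A' ⥤ B') (v : A' ⥤ A)
    (w : B' ⥤ B) (α : v ⋙ u ⟶ u' ⋙ w) : Prop :=
  ∀ b' : B', IsCoasphericalFunctor W (squareSlice u u' v w α b')

/-- The 2-cell of the opposite square. -/
def squareOpCell (u : A ⥤ B) (u' : A' ⥤ B') (v : A' ⥤ A) (w : B' ⥤ B)
    (α : v ⋙ u ⟶ u' ⋙ w) : u'.op ⋙ w.op ⟶ v.op ⋙ u.op :=
  NatTrans.op α

end Squares

section Comps

/-- The 2-cell of the horizontal composite of two squares. -/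
def hcomp2cell {A A' A'' B B' B'' : Type u}
    [SmallCategory A] [SmallCategory A'] [SmallCategory A'']
    [SmallCategory B] [SmallCategory B'] [SmallCategory B'']
    {u : A ⥤ B} {u' : A' ⥤ B'} {u'' : A'' ⥤ B''}
    {v : A' ⥤ A} {w : B' ⥤ B} {v' : A'' ⥤ A'} {w' : B'' ⥤ B'}
    (α : v ⋙ u ⟶ u' ⋙ w) (α' : v' ⋙ u' ⟶ u'' ⋙ w') :
    (v' ⋙ v) ⋙ u ⟶ u'' ⋙ (w' ⋙ w) :=
  Functor.whiskerLeft v' α ≫ Functor.whiskerRight α' w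

/-- The 2-cell of the vertical composite of two squares. -/
def vcomp2cell {A A' B B' C C' : Type u}
    [SmallCategory A] [SmallCategory A'] [SmallCategory B] [SmallCategory B']
    [SmallCategory C] [SmallCategory C']
    {u : A ⥤ B} {u' : A' ⥤ B'} {v : A' ⥤ A} {w : B' ⥤ B}
    {x : B ⥤ C} {x' : B' ⥤ C'} {y : C' ⥤ C}
    (α : v ⋙ u ⟶ u' ⋙ w) (β : w ⋙ x ⟶ x' ⋙ y) :
    v ⋙ (u ⋙ x) ⟶ (u' ⋙ x') ⋙ y :=
  Functor.whiskerRight α x ≫ Functor.whiskerLeft u' β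

end Comps

section Fibers

variable {A B : Type u} [SmallCategory A] [SmallCategory B]

/-- The fiber `A_b` of `F : A ⥤ B` at `b : B`. -/
structure CatFiber (F : A ⥤ B) (b : B) : Type u where
  obj : A
  eq : F.obj obj = b

instance (F : A ⥤ B) (b : B) : Category (CatFiber F b) where
  Hom x y := { f : x.obj ⟶ y.obj // F.map f = eqToHom (x.eq.trans y.eq.symm) }
  id x := ⟨𝟙 x.obj, by simp⟩
  comp {x y z} f g := ⟨f.1 ≫ g.1, by rw [Functor.map_comp, f.2, g.2, eqToHom_trans]⟩
  id_comp f := by apply Subtype.ext; simp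
  comp_id f := by apply Subtype.ext; simp
  assoc f g h := by apply Subtype.ext; simp

/-- The canonical functor `A_b ⥤ A/b`. -/
def fiberToSlice (F : A ⥤ B) (b : B) : CatFiber F b ⥤ CostructuredArrow F b where
  obj x := CostructuredArrow.mk (Y := x.obj) (eqToHom x.eq)
  map {x y} f := CostructuredArrow.homMk f.1 (by simp [f.2])

/-- The canonical functor `A_b ⥤ b\A`. -/
def fiberToCoslice (F : A ⥤ B) (b : B) : CatFiber F b ⥤ StructuredArrow b F where
  obj x := StructuredArrow.mk (Y := x.obj) (eqToHom x.eq.symm)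
  map {x y} f := StructuredArrow.homMk f.1 (by simp [f.2])

/-- The functor `F` is `W`-proper. -/
def IsProper (W : FunctorClass.{u}) (F : A ⥤ B) : Prop :=
  ∀ b : B, IsCoasphericalFunctor W (fiberToSlice F b)

/-- The functor `F` is `W`-smooth. -/
def IsSmooth (W : FunctorClass.{u}) (F : A ⥤ B) : Prop :=
  ∀ b : B, IsAsphericalFunctor W (fiberToCoslice F b)

/-- The functor `F` is a precofibration: each canonical functor `A_b ⥤ A/b` admits a left
adjoint. -/
def IsPrecofibration (F : A ⥤ B) : Prop :=
  ∀ b : B, (fiberToSlice F b).IsRightAdjoint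

end Fibers

/-- `F` is an isomorphism of categories. -/
def IsCatIso {A B : Type u} [SmallCategory A] [SmallCategory B] (F : A ⥤ B) : Prop :=
  ∃ G : B ⥤ A, F ⋙ G = 𝟭 A ∧ G ⋙ F = 𝟭 B

section Pullback

variable {A B B' : Type u} [SmallCategory A] [SmallCategory B] [SmallCategory B']

/-- The strict pullback `B' ×_B A` of `u : A ⥤ B` and `w : B' ⥤ B`. -/
structure CatPullback (u : A ⥤ B) (w : B' ⥤ B) : Type u where
  fst : B'
  snd : A
  eq : w.obj fst = u.obj snd

instance (u : A ⥤ B) (w : B' ⥤ B) : Category (CatPullback u w) where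
  Hom x y := { p : (x.fst ⟶ y.fst) × (x.snd ⟶ y.snd) //
    w.map p.1 ≫ eqToHom y.eq = eqToHom x.eq ≫ u.map p.2 }
  id x := ⟨(𝟙 x.fst, 𝟙 x.snd), by simp⟩
  comp {x y z} f g := ⟨(f.1.1 ≫ g.1.1, f.1.2 ≫ g.1.2), by
    rw [Functor.map_comp, Functor.map_comp, Category.assoc, g.2, ← Category.assoc, f.2,
      Category.assoc]⟩
  id_comp f := by apply Subtype.ext; simp
  comp_id f := by apply Subtype.ext; simp
  assoc f g h := by apply Subtype.ext; simp

/-- First projection of the strict pullback. -/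
def pbFst (u : A ⥤ B) (w : B' ⥤ B) : CatPullback u w ⥤ B' where
  obj x := x.fst
  map f := f.1.1

/-- Second projection of the strict pullback. -/
def pbSnd (u : A ⥤ B) (w : B' ⥤ B) : CatPullback u w ⥤ A where
  obj x := x.snd
  map f := f.1.2

theorem pb_comm (u : A ⥤ B) (w : B' ⥤ B) : pbSnd u w ⋙ u = pbFst u w ⋙ w := by
  have hobj : ∀ x : CatPullback u w, (pbSnd u w ⋙ u).obj x = (pbFst u w ⋙ w).obj x :=
    fun x => x.eq.symm
  refine CategoryTheory.Functor.ext hobj (fun x y f => ?_)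
  have h := f.2
  dsimp only [Functor.comp_map, pbFst, pbSnd]
  rw [h]
  simp
  erw [eqToHom_trans_assoc, eqToHom_refl, Category.id_comp]

/-- The comparison functor from the top-left corner of a commutative square to the
strict pullback. -/
def toPullback {A' : Type u} [SmallCategory A'] (u : A ⥤ B) (u' : A' ⥤ B') (v : A' ⥤ A)
    (w : B' ⥤ B) (h : v ⋙ u = u' ⋙ w) : A' ⥤ CatPullback u w where
  obj a' := ⟨u'.obj a', v.obj a', (Functor.congr_obj h a').symm⟩
  map {x y} f := ⟨(u'.map f, v.map f), by
    have := Functor.congr_hom h f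
    dsimp at this
    rw [this]
    simp⟩
  map_id x := by
    apply Subtype.ext
    show (u'.map (𝟙 x), v.map (𝟙 x)) = (𝟙 _, 𝟙 _)
    simp
  map_comp f g := by
    apply Subtype.ext
    show (u'.map _, v.map _) = (u'.map _ ≫ u'.map _, v.map _ ≫ v.map _)
    simp

end Pullback

section BaseChange

variable {A A' B B' : Type u} [SmallCategory A] [SmallCategory A']
  [SmallCategory B] [SmallCategory B']

/-- The base-change morphism `v ∘ r' ⟶ r ∘ w` associated with a square whose vertical
edges admit right adjoints. -/
def baseChangeR {u : A ⥤ B} {u' : A' ⥤ B'} {v : A' ⥤ A} {w : B' ⥤ B}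
    {r : B ⥤ A} {r' : B' ⥤ A'} (adj : u ⊣ r) (adj' : u' ⊣ r')
    (α : v ⋙ u ⟶ u' ⋙ w) : r' ⋙ v ⟶ w ⋙ r :=
  Functor.whiskerLeft (r' ⋙ v) adj.unit ≫ Functor.whiskerLeft r' (Functor.whiskerRight α r) ≫
    Functor.whiskerRight adj'.counit (w ⋙ r)

/-- The base-change morphism `w'' ∘ u ⟶ u' ∘ v''` associated with a square whose horizontal
edges admit left adjoints. -/
def baseChangeL {u : A ⥤ B} {u' : A' ⥤ B'} {v : A' ⥤ A} {w : B' ⥤ B}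
    {v'' : A ⥤ A'} {w'' : B ⥤ B'} (adjv : v'' ⊣ v) (adjw : w'' ⊣ w)
    (α : v ⋙ u ⟶ u' ⋙ w) : u ⋙ w'' ⟶ v'' ⋙ u' :=
  Functor.whiskerRight adjv.unit (u ⋙ w'') ≫ Functor.whiskerLeft v'' (Functor.whiskerRight α w'') ≫
    Functor.whiskerLeft (v'' ⋙ u') adjw.counit

end BaseChange

section LocColoc

variable {X Y C : Type u} [SmallCategory X] [SmallCategory Y] [SmallCategory C]

/-- `F : X ⥤ Y`, viewed over `C` via `P : Y ⥤ C` (and `F ⋙ P` on `X`), is a `W`-equivalence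
locally on `C`. -/
def IsLocallyEquiv (W : FunctorClass.{u}) (F : X ⥤ Y) (P : Y ⥤ C) : Prop :=
  ∀ c : C, W (triangleSlice F P c)

/-- `F : X ⥤ Y`, viewed over `C` via `P : Y ⥤ C` (and `F ⋙ P` on `X`), is a `W`-equivalence
colocally on `C`. -/
def IsColocallyEquiv (W : FunctorClass.{u}) (F : X ⥤ Y) (P : Y ⥤ C) : Prop :=
  ∀ c : C, W (triangleCoslice F P c)

end LocColoc

/-- A square `(u, u', v, w, α)` is weakly `W`-exact. -/
def IsWeakExactSquare (W : FunctorClass.{u}) {A A' B B' : Type u} [SmallCategory A]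
    [SmallCategory A'] [SmallCategory B] [SmallCategory B'] (u : A ⥤ B) (u' : A' ⥤ B')
    (v : A' ⥤ A) (w : B' ⥤ B) (α : v ⋙ u ⟶ u' ⋙ w) : Prop :=
  ∀ b' : B', IsColocallyEquiv W (squareSlice u u' v w α b') (CostructuredArrow.proj u (w.obj b'))

/-- `w : B' ⥤ B` is a discrete fibration. -/
def IsDiscreteFibration {B' B : Type u} [SmallCategory B'] [SmallCategory B]
    (w : B' ⥤ B) : Prop :=
  ∀ (b' : B') (b : B) (g : b ⟶ w.obj b'),
    ∃! p : Σ b₀ : B', b₀ ⟶ b', ∃ h : w.obj p.1 = b, w.map p.2 = eqToHom h ≫ g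

/-- The coarse fundamental localizer: functors whose source and target are both empty or
both nonempty. -/
def coarseLocalizer : FunctorClass.{u} :=
  @fun A B _ _ _ => Nonempty A ↔ Nonempty B

/-- The map induced on sets of connected components. -/
def π₀map {A B : Type u} [SmallCategory A] [SmallCategory B] (F : A ⥤ B) :
    ConnectedComponents A → ConnectedComponents B :=
  F.mapConnectedComponents

/-- The fundamental localizer `W₀` of `0`-equivalences: functors inducing a bijection on
connected components. -/
def W₀ : FunctorClass.{u} :=
  @fun _ _ _ _ F => Function.Bijective (π₀map F)

/-- A square in `Cat`: four small categories, four functors and a `2`-cell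
`α : u ∘ v ⟶ w ∘ u'`. -/
structure CatSquare : Type (u + 1) where
  {A' : Type u}
  {A : Type u}
  {B' : Type u}
  {B : Type u}
  [instA' : SmallCategory A']
  [instA : SmallCategory A]
  [instB' : SmallCategory B']
  [instB : SmallCategory B]
  u : A ⥤ B
  u' : A' ⥤ B'
  v : A' ⥤ A
  w : B' ⥤ B
  α : v ⋙ u ⟶ u' ⋙ w

attribute [instance] CatSquare.instA' CatSquare.instA CatSquare.instB' CatSquare.instB

/-- A bundled square is `W`-exact. -/
def CatSquare.IsExact (W : FunctorClass.{u}) (S : CatSquare.{u}) : Prop :=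
  IsExactSquare W S.u S.u' S.v S.w S.α

/-- The opposite of a square. -/
def CatSquare.op (S : CatSquare.{u}) : CatSquare.{u} :=
  ⟨S.w.op, S.v.op, S.u'.op, S.u.op, squareOpCell S.u S.u' S.v S.w S.α⟩

/-- The comma square associated with `u : A ⥤ B` and `w : B' ⥤ B`. -/
def commaSquare {A B B' : Type u} [SmallCategory A] [SmallCategory B] [SmallCategory B']
    (u : A ⥤ B) (w : B' ⥤ B) : CatSquare.{u} :=
  ⟨u, Comma.snd u w, Comma.fst u w, w, Comma.natTrans u w⟩

/-- The comma square `D^g_{u, b}` of `u : A ⥤ B` at an object `b : B`. -/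
def commaObjSquare {A B : Type u} [SmallCategory A] [SmallCategory B] (u : A ⥤ B) (b : B) :
    CatSquare.{u} :=
  commaSquare u (Functor.fromPUnit.{u} b)

/-- The dual comma square `D^d_{v, a}` of `v : A' ⥤ A` at an object `a : A`. -/
def commaObjSquareD {A' A : Type u} [SmallCategory A'] [SmallCategory A] (v : A' ⥤ A)
    (a : A) : CatSquare.{u} :=
  commaSquare (Functor.fromPUnit.{u} a) v

/-- The square with top edge `F : A ⥤ B`, the canonical functors `A ⥤ e`, `B ⥤ e` as
vertical edges, identity bottom edge and identity `2`-cell. -/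
def starSquare {A B : Type u} [SmallCategory A] [SmallCategory B] (F : A ⥤ B) :
    CatSquare.{u} :=
  ⟨Functor.star B, Functor.star A, F, 𝟭 (PtCat.{u}), 𝟙 (F ⋙ Functor.star B)⟩

/-- The square with all four corners of the form `(A, e, e, e)`, canonical edges and
identity `2`-cell. -/
def ptSquare (A : Type u) [SmallCategory A] : CatSquare.{u} :=
  ⟨𝟭 (PtCat.{u}), Functor.star A, Functor.star A, 𝟭 (PtCat.{u}), 𝟙 (Functor.star A)⟩

/-- `Q` is stable under horizontal composition of squares (condition CS1h). -/
def StableHComp (Q : CatSquare.{u} → Prop) : Prop :=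
  ∀ {A A' A'' B B' B'' : Type u}
    [SmallCategory A] [SmallCategory A'] [SmallCategory A'']
    [SmallCategory B] [SmallCategory B'] [SmallCategory B'']
    (u : A ⥤ B) (u' : A' ⥤ B') (u'' : A'' ⥤ B'')
    (v : A' ⥤ A) (w : B' ⥤ B) (v' : A'' ⥤ A') (w' : B'' ⥤ B')
    (α : v ⋙ u ⟶ u' ⋙ w) (α' : v' ⋙ u' ⟶ u'' ⋙ w'),
    Q ⟨u, u', v, w, α⟩ → Q ⟨u', u'', v', w', α'⟩ →
    Q ⟨u, u'', v' ⋙ v, w' ⋙ w, hcomp2cell α α'⟩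

/-- `Q` is stable under vertical composition of squares (condition CS1v). -/
def StableVComp (Q : CatSquare.{u} → Prop) : Prop :=
  ∀ {A A' B B' C C' : Type u}
    [SmallCategory A] [SmallCategory A'] [SmallCategory B] [SmallCategory B']
    [SmallCategory C] [SmallCategory C']
    (u : A ⥤ B) (u' : A' ⥤ B') (v : A' ⥤ A) (w : B' ⥤ B)
    (x : B ⥤ C) (x' : B' ⥤ C') (y : C' ⥤ C)
    (α : v ⋙ u ⟶ u' ⋙ w) (β : w ⋙ x ⟶ x' ⋙ y),
    Q ⟨u, u', v, w, α⟩ → Q ⟨x, x', w, y, β⟩ →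
    Q ⟨u ⋙ x, u' ⋙ x', v, y, vcomp2cell α β⟩

/-- `Q` satisfies horizontal descent (condition CS2h). -/
def HorizontalDescent (Q : CatSquare.{u} → Prop) : Prop :=
  ∀ {A A' B B' : Type u}
    [SmallCategory A] [SmallCategory A'] [SmallCategory B] [SmallCategory B']
    (u : A ⥤ B) (u' : A' ⥤ B') (v : A' ⥤ A) (w : B' ⥤ B) (α : v ⋙ u ⟶ u' ⋙ w)
    (J : Type u) (Aj Bj : J → Type u)
    [∀ j, SmallCategory (Aj j)] [∀ j, SmallCategory (Bj j)]
    (uj : ∀ j, Aj j ⥤ Bj j) (vj : ∀ j, Aj j ⥤ A') (wj : ∀ j, Bj j ⥤ B')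
    (αj : ∀ j, vj j ⋙ u' ⟶ uj j ⋙ wj j),
    (∀ b' : B', ∃ j, ∃ b : Bj j, (wj j).obj b = b') →
    (∀ j, Q ⟨u', uj j, vj j, wj j, αj j⟩) →
    (∀ j, Q ⟨u, uj j, vj j ⋙ v, wj j ⋙ w, hcomp2cell α (αj j)⟩) →
    Q ⟨u, u', v, w, α⟩

/-- `Q` satisfies local descent (condition CS3h). -/
def LocalDescent (Q : CatSquare.{u} → Prop) : Prop :=
  ∀ {A A' B B' : Type u}
    [SmallCategory A] [SmallCategory A'] [SmallCategory B] [SmallCategory B']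
    (u : A ⥤ B) (u' : A' ⥤ B') (v : A' ⥤ A) (w : B' ⥤ B) (α : v ⋙ u ⟶ u' ⋙ w),
    (∀ b' : B', Q ⟨u, Comma.snd u' (Functor.fromPUnit.{u} b'),
        Comma.fst u' (Functor.fromPUnit.{u} b') ⋙ v, Functor.fromPUnit.{u} b' ⋙ w,
        hcomp2cell α (Comma.natTrans u' (Functor.fromPUnit.{u} b'))⟩) →
    Q ⟨u, u', v, w, α⟩

/-- `Q` satisfies colocal descent (condition CS3v). -/
def ColocalDescent (Q : CatSquare.{u} → Prop) : Prop :=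
  ∀ {A A' B B' : Type u}
    [SmallCategory A] [SmallCategory A'] [SmallCategory B] [SmallCategory B']
    (u : A ⥤ B) (u' : A' ⥤ B') (v : A' ⥤ A) (w : B' ⥤ B) (α : v ⋙ u ⟶ u' ⋙ w),
    (∀ a : A, Q ⟨Functor.fromPUnit.{u} a ⋙ u,
        Comma.snd (Functor.fromPUnit.{u} a) v ⋙ u',
        Comma.fst (Functor.fromPUnit.{u} a) v, w,
        vcomp2cell (Comma.natTrans (Functor.fromPUnit.{u} a) v) α⟩) →
    Q ⟨u, u', v, w, α⟩

/-- `Q` is stable under passing to opposite squares (condition CS4). -/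
def OpStable (Q : CatSquare.{u} → Prop) : Prop :=
  ∀ S : CatSquare.{u}, Q S → Q S.op

/-- Isomorphism of squares. -/
def CatSquare.Isomorphic (S T : CatSquare.{u}) : Prop :=
  ∃ (eA' : S.A' ⥤ T.A') (eA : S.A ⥤ T.A) (eB' : S.B' ⥤ T.B') (eB : S.B ⥤ T.B)
    (_ : IsCatIso eA') (_ : IsCatIso eA) (_ : IsCatIso eB') (_ : IsCatIso eB)
    (hv : S.v ⋙ eA = eA' ⋙ T.v) (hu : S.u ⋙ eB = eA ⋙ T.u)
    (hu' : S.u' ⋙ eB' = eA' ⋙ T.u') (hw : S.w ⋙ eB = eB' ⋙ T.w),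
    Functor.whiskerRight S.α eB =
      eqToHom (by rw [Functor.assoc, hu, ← Functor.assoc, hv, Functor.assoc]) ≫
        Functor.whiskerLeft eA' T.α ≫
        eqToHom (by rw [← Functor.assoc, ← hu', Functor.assoc, ← hw, ← Functor.assoc])

/-- A bundled square is a right Beck–Chevalley square. -/
def CatSquare.IsRightBC (S : CatSquare.{u}) : Prop :=
  ∃ (v'' : S.A ⥤ S.A') (w'' : S.B ⥤ S.B') (adjv : v'' ⊣ S.v) (adjw : w'' ⊣ S.w),
    IsIso (baseChangeL adjv adjw S.α)

/-- The functor `A/b ⥤ B/b` induced by `u : A ⥤ B`, in terms of comma categories. -/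
def commaSliceInduced {A B : Type u} [SmallCategory A] [SmallCategory B] (u : A ⥤ B)
    (b : B) : Comma u (Functor.fromPUnit.{u} b) ⥤ Comma (𝟭 B) (Functor.fromPUnit.{u} b) where
  obj x := { left := u.obj x.left, right := x.right, hom := x.hom }
  map {x y} f := { left := u.map f.left, right := f.right, w := by simp [f.w] }

/-- The cartesian square expressing `A/b` as the pullback of `u : A ⥤ B` along the
forgetful functor `B/b ⥤ B`. -/
def sliceCartSquare {A B : Type u} [SmallCategory A] [SmallCategory B] (u : A ⥤ B)
    (b : B) : CatSquare.{u} :=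
  ⟨u, commaSliceInduced u b, Comma.fst u (Functor.fromPUnit.{u} b),
    Comma.fst (𝟭 B) (Functor.fromPUnit.{u} b),
    𝟙 (Comma.fst u (Functor.fromPUnit.{u} b) ⋙ u)⟩


/-! The category `A'_{(a,b',g)}` is isomorphic both to the category of objects under `(a, g)`
relative to the functor `A'/b' ⥤ A/w(b')` and to the category of objects over `(b', g)` relative
to the functor `a\A' ⥤ u(a)\B'`. Every object of `A/w(b')` and of `u(a)\B'` is such a pair, so
(a) and (b) both say that all the categories `A'_{(a,b',g)}` are aspherical; asphericity is
invariant under isomorphism of categories by the retract axiom and two-out-of-three. -/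

theorem IsWeakFundamentalLocalizer.mem_of_isCatIso {W : FunctorClass.{u}}
    (hW : IsWeakFundamentalLocalizer W) {X Y : Type u} [SmallCategory X] [SmallCategory Y]
    {F : X ⥤ Y} (hF : IsCatIso F) : W F := by
  obtain ⟨G, hFG, hGF⟩ := hF
  exact hW.retract_mem G F hGF (hFG ▸ hW.id_mem X)

theorem isAsphericalCat_iff_of_isCatIso {W : FunctorClass.{u}}
    (hW : IsWeakFundamentalLocalizer W) {X Y : Type u} [SmallCategory X] [SmallCategory Y]
    {F : X ⥤ Y} (hF : IsCatIso F) : IsAsphericalCat W X ↔ IsAsphericalCat W Y := by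
  have hstar : Functor.star X = F ⋙ Functor.star Y :=
    CategoryTheory.Functor.ext (fun _ => rfl)
  have hWF := hW.mem_of_isCatIso hF
  rw [IsAsphericalCat, hstar]
  exact ⟨hW.of_comp_left F _ hWF, hW.comp_mem F _ hWF⟩

theorem CostructuredArrow.forall_iff {A B : Type u} [SmallCategory A] [SmallCategory B]
    {F : A ⥤ B} {b : B} {P : CostructuredArrow F b → Prop} :
    (∀ x, P x) ↔ ∀ (a : A) (g : F.obj a ⟶ b), P (CostructuredArrow.mk g) :=
  ⟨fun h _ _ => h _, fun h x => h x.left x.hom⟩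

theorem StructuredArrow.forall_iff {A B : Type u} [SmallCategory A] [SmallCategory B]
    {F : A ⥤ B} {b : B} {P : StructuredArrow b F → Prop} :
    (∀ x, P x) ↔ ∀ (a : A) (g : b ⟶ F.obj a), P (StructuredArrow.mk g) :=
  ⟨fun h _ _ => h _, fun h x => h x.right x.hom⟩

namespace SquareFiber

variable {A A' B B' : Type u} [SmallCategory A] [SmallCategory A']
  [SmallCategory B] [SmallCategory B']
  (u : A ⥤ B) (u' : A' ⥤ B') (v : A' ⥤ A) (w : B' ⥤ B) (α : v ⋙ u ⟶ u' ⋙ w)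
  (a : A) (b' : B') (g : u.obj a ⟶ w.obj b')

def toStructuredArrow : SquareFiber u u' v w α a b' g ⥤
    StructuredArrow (CostructuredArrow.mk g) (squareSlice u u' v w α b') where
  obj s := StructuredArrow.mk (Y := CostructuredArrow.mk s.g')
    (CostructuredArrow.homMk s.f (by simpa [squareSlice] using s.fac))
  map t := StructuredArrow.homMk (CostructuredArrow.homMk t.1 t.2.2)
    (CostructuredArrow.hom_ext _ _ t.2.1)

def ofStructuredArrow : StructuredArrow (CostructuredArrow.mk g) (squareSlice u u' v w α b') ⥤
    SquareFiber u u' v w α a b' g where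
  obj z := ⟨z.right.left, z.hom.left, z.right.hom,
    by simpa [squareSlice] using CostructuredArrow.w z.hom⟩
  map k := ⟨k.right.left,
    by simpa [squareSlice] using congrArg CommaMorphism.left (StructuredArrow.w k),
    CostructuredArrow.w k.right⟩

theorem isCatIso_toStructuredArrow : IsCatIso (toStructuredArrow u u' v w α a b' g) :=
  ⟨ofStructuredArrow u u' v w α a b' g, rfl, rfl⟩

def toCostructuredArrow : SquareFiber u u' v w α a b' g ⥤
    CostructuredArrow (squareCoslice u u' v w α a) (StructuredArrow.mk g) where
  obj s := CostructuredArrow.mk (Y := StructuredArrow.mk s.f)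
    (StructuredArrow.homMk s.g' (by simpa [squareCoslice] using s.fac))
  map t := CostructuredArrow.homMk (StructuredArrow.homMk t.1 t.2.1)
    (StructuredArrow.hom_ext _ _ t.2.2)

def ofCostructuredArrow :
    CostructuredArrow (squareCoslice u u' v w α a) (StructuredArrow.mk g) ⥤
      SquareFiber u u' v w α a b' g where
  obj z := ⟨z.left.right, z.left.hom, z.hom.right,
    by simpa [squareCoslice] using StructuredArrow.w z.hom⟩
  map k := ⟨k.left.right, StructuredArrow.w k.left,
    by simpa [squareCoslice] using congrArg CommaMorphism.right (CostructuredArrow.w k)⟩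

theorem isCatIso_toCostructuredArrow : IsCatIso (toCostructuredArrow u u' v w α a b' g) :=
  ⟨ofCostructuredArrow u u' v w α a b' g, rfl, rfl⟩

end SquareFiber

section Exactness

variable {W : FunctorClass.{u}} {A A' B B' : Type u} [SmallCategory A] [SmallCategory A']
  [SmallCategory B] [SmallCategory B']
  (u : A ⥤ B) (u' : A' ⥤ B') (v : A' ⥤ A) (w : B' ⥤ B) (α : v ⋙ u ⟶ u' ⋙ w)
theorem forall_isCoasphericalFunctor_squareSlice_iff (hW : IsWeakFundamentalLocalizer W) :
    (∀ b' : B', IsCoasphericalFunctor W (squareSlice u u' v w α b')) ↔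
      ∀ (a : A) (b' : B') (g : u.obj a ⟶ w.obj b'),
        IsAsphericalCat W (SquareFiber u u' v w α a b' g) := by
  simp only [IsCoasphericalFunctor, CostructuredArrow.forall_iff,
    isAsphericalCat_iff_of_isCatIso hW (SquareFiber.isCatIso_toStructuredArrow ..)]
  exact forall_comm

theorem forall_isAsphericalFunctor_squareCoslice_iff (hW : IsWeakFundamentalLocalizer W) :
    (∀ a : A, IsAsphericalFunctor W (squareCoslice u u' v w α a)) ↔
      ∀ (a : A) (b' : B') (g : u.obj a ⟶ w.obj b'),
        IsAsphericalCat W (SquareFiber u u' v w α a b' g) := by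
  simp only [IsAsphericalFunctor, StructuredArrow.forall_iff,
    isAsphericalCat_iff_of_isCatIso hW (SquareFiber.isCatIso_toCostructuredArrow ..)]

end Exactness

theorem statement0 (W : FunctorClass.{u}) (hW : IsWeakFundamentalLocalizer W)
    {A A' B B' : Type u} [SmallCategory A] [SmallCategory A'] [SmallCategory B]
    [SmallCategory B'] (u : A ⥤ B) (u' : A' ⥤ B') (v : A' ⥤ A) (w : B' ⥤ B)
    (α : v ⋙ u ⟶ u' ⋙ w) :
    ((∀ b' : B', IsCoasphericalFunctor W (squareSlice u u' v w α b')) ↔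
        (∀ a : A, IsAsphericalFunctor W (squareCoslice u u' v w α a)))
      ∧ ((∀ b' : B', IsCoasphericalFunctor W (squareSlice u u' v w α b')) ↔
        (∀ (a : A) (b' : B') (g : u.obj a ⟶ w.obj b'),
          IsAsphericalCat W (SquareFiber u u' v w α a b' g))) := by
  have hac := forall_isCoasphericalFunctor_squareSlice_iff u u' v w α hW
  exact ⟨hac.trans (forall_isAsphericalFunctor_squareCoslice_iff u u' v w α hW).symm, hac⟩

end Paper
end

section
/- Let W be a weak fundamental localizer. The class of W-exact squares in Cat is stable under horizontal and vertical composition: if D' (with 2-cell α' : u' ∘ v' ⟶ w' ∘ u'') and D (with α : u ∘ v ⟶ w ∘ u') are horizontally composable squares that are both W-exact, then their horizontal composite D ∘h D' (with 2-cell (w ★ α')(α ★ v') : u ∘ (v ∘ v') ⟶ (w ∘ w') ∘ u'') is W-exact; and similarly for vertical composition. -/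
open CategoryTheory

universe u

namespace Paper

/-!
A square is `W`-exact exactly when, for every `a`, `b'` and `g : u a ⟶ w b'`, the category
`SquareFiber` of factorizations of `g` through the square is `W`-aspherical. For a horizontal
composite, restricting a factorization through the composite to the first square is a functor
whose coslices are, up to an adjunction, factorization categories of the second square; it is
therefore `W`-coaspherical, hence in `W`, and asphericity of the target passes to the source.
Vertical composites are treated in the same way, with slices in place of coslices.

Left adjoints lie in `W` because their slices have terminal objects. That coaspherical functors
lie in `W` as well is the dual statement; it follows from the stability of `W` under
`F ↦ F.op`, which is proved with the twisted arrow category: each slice of its projections to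
`A` and to `Aᵒᵖ` has a left adjoint to a category with an initial object.
-/

open Opposite

structure TwistedArrow (A : Type u) [SmallCategory A] : Type u where
  {left : A}
  {right : A}
  hom : left ⟶ right

namespace TwistedArrow

variable {A B : Type u} [SmallCategory A] [SmallCategory B]

@[ext]
structure Hom (X Y : TwistedArrow A) : Type u where
  left : Y.left ⟶ X.left
  right : X.right ⟶ Y.right
  w : left ≫ X.hom ≫ right = Y.hom

instance : SmallCategory (TwistedArrow A) where
  Hom := Hom
  id X := ⟨𝟙 _, 𝟙 _, by simp⟩
  comp f g := ⟨g.left ≫ f.left, f.right ≫ g.right, by rw [← g.w, ← f.w]; simp⟩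

@[ext]
theorem hom_ext {X Y : TwistedArrow A} {f g : X ⟶ Y} (hl : f.left = g.left)
    (hr : f.right = g.right) : f = g :=
  Hom.ext hl hr

@[simp] theorem id_left (X : TwistedArrow A) : Hom.left (𝟙 X) = 𝟙 X.left := rfl
@[simp] theorem id_right (X : TwistedArrow A) : Hom.right (𝟙 X) = 𝟙 X.right := rfl
@[simp] theorem comp_left {X Y Z : TwistedArrow A} (f : X ⟶ Y) (g : Y ⟶ Z) :
    (f ≫ g).left = g.left ≫ f.left := rfl
@[simp] theorem comp_right {X Y Z : TwistedArrow A} (f : X ⟶ Y) (g : Y ⟶ Z) :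
    (f ≫ g).right = f.right ≫ g.right := rfl

abbrev leftFunc (A : Type u) [SmallCategory A] : TwistedArrow A ⥤ Aᵒᵖ where
  obj X := op X.left
  map f := f.left.op

abbrev rightFunc (A : Type u) [SmallCategory A] : TwistedArrow A ⥤ A where
  obj X := X.right
  map f := f.right

def map (F : A ⥤ B) : TwistedArrow A ⥤ TwistedArrow B where
  obj X := ⟨F.map X.hom⟩
  map f := ⟨F.map f.left, F.map f.right, by simp only [← F.map_comp, f.w]⟩

theorem map_comp_rightFunc (F : A ⥤ B) : map F ⋙ rightFunc B = rightFunc A ⋙ F := rfl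

theorem map_comp_leftFunc (F : A ⥤ B) : map F ⋙ leftFunc B = leftFunc A ⋙ F.op := rfl

variable (a : A)

def sliceRightFuncToOverOp : CostructuredArrow (rightFunc A) a ⥤ (Over a)ᵒᵖ where
  obj X := op (Over.mk (X.left.hom ≫ X.hom))
  map {X Y} g := (Over.homMk g.left.left (by
    rw [← CostructuredArrow.w g, ← g.left.w]
    simp)).op

def overOpToSliceRightFunc : (Over a)ᵒᵖ ⥤ CostructuredArrow (rightFunc A) a where
  obj k := CostructuredArrow.mk (Y := (⟨k.unop.hom⟩ : TwistedArrow A)) (𝟙 a)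
  map {k l} g := CostructuredArrow.homMk ⟨g.unop.left, 𝟙 a, by simp⟩

def sliceRightFuncAdjunction : sliceRightFuncToOverOp a ⊣ overOpToSliceRightFunc a :=
  Adjunction.mkOfUnitCounit
    { unit :=
        { app := fun X => CostructuredArrow.homMk ⟨𝟙 _, X.hom, Category.id_comp _⟩
            (by simp [overOpToSliceRightFunc])
          naturality := fun X Y g => by
            ext
            · simp [sliceRightFuncToOverOp, overOpToSliceRightFunc]
            · simpa [sliceRightFuncToOverOp, overOpToSliceRightFunc] using
                CostructuredArrow.w g }
      counit :=
        { app := fun k => (Over.homMk (𝟙 k.unop.left) : k.unop ⟶ Over.mk (k.unop.hom ≫ 𝟙 a)).op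
          naturality := fun _ _ _ => Quiver.Hom.unop_inj (by
            ext; simp [sliceRightFuncToOverOp, overOpToSliceRightFunc]) }
      left_triangle := by
        ext X
        apply Quiver.Hom.unop_inj
        ext
        simp [sliceRightFuncToOverOp, overOpToSliceRightFunc]
      right_triangle := by
        ext k <;> simp [sliceRightFuncToOverOp, overOpToSliceRightFunc] }

def sliceLeftFuncToUnder : CostructuredArrow (leftFunc A) (op a) ⥤ Under a where
  obj X := Under.mk (X.hom.unop ≫ X.left.hom)
  map {X Y} g := Under.homMk g.left.right (by
    rw [← CostructuredArrow.w g, ← g.left.w]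
    simp)

def underToSliceLeftFunc : Under a ⥤ CostructuredArrow (leftFunc A) (op a) where
  obj k := CostructuredArrow.mk (Y := (⟨k.hom⟩ : TwistedArrow A)) (𝟙 (op a))
  map {k l} g := CostructuredArrow.homMk ⟨𝟙 a, g.right, by simp⟩

def sliceLeftFuncAdjunction : sliceLeftFuncToUnder a ⊣ underToSliceLeftFunc a :=
  Adjunction.mkOfUnitCounit
    { unit :=
        { app := fun X => CostructuredArrow.homMk
            ⟨X.hom.unop, 𝟙 _, by simp [sliceLeftFuncToUnder, underToSliceLeftFunc]⟩
            (by simp [underToSliceLeftFunc])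
          naturality := fun X Y g => by
            ext
            · simpa [sliceLeftFuncToUnder, underToSliceLeftFunc] using
                congrArg Quiver.Hom.unop (CostructuredArrow.w g)
            · simp [sliceLeftFuncToUnder, underToSliceLeftFunc] }
      counit :=
        { app := fun k => (Under.homMk (𝟙 k.right) : Under.mk (𝟙 a ≫ k.hom) ⟶ k)
          naturality := fun _ _ _ => by ext; simp [sliceLeftFuncToUnder, underToSliceLeftFunc] }
      left_triangle := by
        ext X
        simp [sliceLeftFuncToUnder, underToSliceLeftFunc]
      right_triangle := by
        ext k <;> simp [sliceLeftFuncToUnder, underToSliceLeftFunc] }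

end TwistedArrow

namespace IsWeakFundamentalLocalizer

variable {W : FunctorClass.{u}} {A B : Type u} [SmallCategory A] [SmallCategory B]

theorem isAsphericalCat_of_mem (hW : IsWeakFundamentalLocalizer W) {F : A ⥤ B} (hF : W F)
    (hB : IsAsphericalCat W B) : IsAsphericalCat W A := by
  have h := hW.comp_mem F _ hF hB
  rwa [Functor.punit_ext' (F ⋙ Functor.star B) (Functor.star A)] at h

theorem mem_of_isAsphericalFunctor (hW : IsWeakFundamentalLocalizer W) {F : A ⥤ B}
    (hF : IsAsphericalFunctor W F) : W F :=
  hW.mem_of_slices F fun b => hW.of_comp_right _ (Functor.star (Over b))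
    (hW.star_mem _ Over.mkIdTerminal.hasTerminal)
    (by rw [Functor.punit_ext' (_ ⋙ _) (Functor.star _)]; exact hF b)

theorem mem_of_adjunction (hW : IsWeakFundamentalLocalizer W) {F : A ⥤ B} {G : B ⥤ A}
    (adj : F ⊣ G) : W F :=
  hW.mem_of_isAsphericalFunctor fun b =>
    hW.star_mem _ (mkTerminalOfRightAdjoint G adj b).hasTerminal

theorem isAsphericalCat_of_adjunction (hW : IsWeakFundamentalLocalizer W) {F : A ⥤ B}
    {G : B ⥤ A} (adj : F ⊣ G) (hB : IsAsphericalCat W B) : IsAsphericalCat W A :=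
  hW.isAsphericalCat_of_mem (hW.mem_of_adjunction adj) hB

theorem isAsphericalCat_of_equivalence (hW : IsWeakFundamentalLocalizer W) (e : A ≌ B)
    (hB : IsAsphericalCat W B) : IsAsphericalCat W A :=
  hW.isAsphericalCat_of_adjunction e.toAdjunction hB

theorem isAsphericalCat_of_isInitial (hW : IsWeakFundamentalLocalizer W) {i : A}
    (hi : Limits.IsInitial i) : IsAsphericalCat W A := by
  let adj : Functor.fromPUnit.{u} i ⊣ Functor.star A :=
    Adjunction.mkOfUnitCounit
      { unit := { app := fun _ => 𝟙 _ }
        counit := { app := fun a => hi.to a, naturality := fun _ _ _ => hi.hom_ext _ _ }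
        left_triangle := by ext; exact hi.hom_ext _ _ }
  refine hW.of_comp_left _ _ (hW.mem_of_adjunction adj) ?_
  rw [Functor.punit_ext' (_ ⋙ _) (𝟭 _)]
  exact hW.id_mem _

theorem mem_twistedArrow_rightFunc (hW : IsWeakFundamentalLocalizer W) :
    W (TwistedArrow.rightFunc A) :=
  hW.mem_of_isAsphericalFunctor fun a =>
    hW.isAsphericalCat_of_adjunction (TwistedArrow.sliceRightFuncAdjunction a)
      (hW.isAsphericalCat_of_isInitial Over.mkIdTerminal.op)

theorem mem_twistedArrow_leftFunc (hW : IsWeakFundamentalLocalizer W) :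
    W (TwistedArrow.leftFunc A) :=
  hW.mem_of_isAsphericalFunctor fun a =>
    hW.isAsphericalCat_of_adjunction (TwistedArrow.sliceLeftFuncAdjunction a.unop)
      (hW.isAsphericalCat_of_isInitial Under.mkIdInitial)

theorem mem_op (hW : IsWeakFundamentalLocalizer W) {F : A ⥤ B} (hF : W F) : W F.op := by
  have hTwF : W (TwistedArrow.map F) := by
    refine hW.of_comp_right _ _ hW.mem_twistedArrow_rightFunc ?_
    rw [TwistedArrow.map_comp_rightFunc]
    exact hW.comp_mem _ _ hW.mem_twistedArrow_rightFunc hF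
  refine hW.of_comp_left _ _ hW.mem_twistedArrow_leftFunc ?_
  rw [← TwistedArrow.map_comp_leftFunc]
  exact hW.comp_mem _ _ hTwF hW.mem_twistedArrow_leftFunc

theorem mem_of_op (hW : IsWeakFundamentalLocalizer W) {F : A ⥤ B} (hF : W F.op) : W F := by
  have hopOp : ∀ (C : Type u) [SmallCategory C], W (opOp C) := fun C _ =>
    hW.mem_of_adjunction (opOpEquivalence C).symm.toAdjunction
  exact hW.of_comp_right _ _ (hopOp B) (hW.comp_mem (opOp A) F.op.op (hopOp A) (hW.mem_op hF))

theorem isAsphericalCat_op (hW : IsWeakFundamentalLocalizer W) (hA : IsAsphericalCat W A) :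
    IsAsphericalCat W Aᵒᵖ :=
  hW.isAsphericalCat_of_mem (hW.mem_op hA) (hW.star_mem _ inferInstance)

theorem mem_of_isCoasphericalFunctor (hW : IsWeakFundamentalLocalizer W) {F : A ⥤ B}
    (hF : IsCoasphericalFunctor W F) : W F :=
  hW.mem_of_op <| hW.mem_of_isAsphericalFunctor fun b =>
    hW.isAsphericalCat_of_equivalence (structuredArrowOpEquivalence F b.unop).symm
      (hW.isAsphericalCat_op (hF b.unop))

end IsWeakFundamentalLocalizer

namespace SquareFiber

variable {A A' B B' : Type u} [SmallCategory A] [SmallCategory A'] [SmallCategory B]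
  [SmallCategory B'] {u : A ⥤ B} {u' : A' ⥤ B'} {v : A' ⥤ A} {w : B' ⥤ B}
  {α : v ⋙ u ⟶ u' ⋙ w} {a : A} {b' : B'} {g : u.obj a ⟶ w.obj b'}

@[ext]
theorem hom_ext {s t : SquareFiber u u' v w α a b' g} {m m' : s ⟶ t} (h : m.1 = m'.1) :
    m = m' :=
  Subtype.ext h

@[simp]
theorem id_val (s : SquareFiber u u' v w α a b' g) : (𝟙 s : s ⟶ s).1 = 𝟙 s.pt := rfl

@[simp]
theorem comp_val {s t r : SquareFiber u u' v w α a b' g} (m : s ⟶ t) (m' : t ⟶ r) :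
    (m ≫ m').1 = m.1 ≫ m'.1 := rfl

end SquareFiber

section Exactness

variable {W : FunctorClass.{u}} {A A' B B' : Type u} [SmallCategory A] [SmallCategory A']
  [SmallCategory B] [SmallCategory B'] {u : A ⥤ B} {u' : A' ⥤ B'} {v : A' ⥤ A} {w : B' ⥤ B}

def structuredArrowSquareSliceEquivalence (α : v ⋙ u ⟶ u' ⋙ w) (b' : B')
    (ξ : CostructuredArrow u (w.obj b')) :
    StructuredArrow ξ (squareSlice u u' v w α b') ≌ SquareFiber u u' v w α ξ.left b' ξ.hom :=
  CategoryTheory.Equivalence.mk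
    { obj Z := ⟨Z.right.left, Z.hom.left, Z.right.hom, CostructuredArrow.w Z.hom⟩
      map {Z₁ Z₂} m := ⟨m.right.left, by
          simpa [squareSlice] using congrArg CommaMorphism.left (StructuredArrow.w m),
        CostructuredArrow.w m.right⟩ }
    { obj s := StructuredArrow.mk (Y := CostructuredArrow.mk (Y := s.pt) s.g')
        (CostructuredArrow.homMk s.f (by simpa [squareSlice] using s.fac))
      map {s₁ s₂} m := StructuredArrow.homMk (CostructuredArrow.homMk m.1 m.2.2)
        (by ext; exact m.2.1) }
    (Iso.refl _) (Iso.refl _)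

theorem isExactSquare_iff_isAsphericalCat_squareFiber (hW : IsWeakFundamentalLocalizer W)
    {α : v ⋙ u ⟶ u' ⋙ w} :
    IsExactSquare W u u' v w α ↔
      ∀ a b' (g : u.obj a ⟶ w.obj b'), IsAsphericalCat W (SquareFiber u u' v w α a b' g) := by
  refine ⟨fun h a b' g => ?_, fun h b' ξ => ?_⟩
  · exact hW.isAsphericalCat_of_equivalence
      (structuredArrowSquareSliceEquivalence α b' (.mk g)).symm (h b' (.mk g))
  · exact hW.isAsphericalCat_of_equivalence
      (structuredArrowSquareSliceEquivalence α b' ξ) (h ξ.left b' ξ.hom)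

end Exactness

section HComp

variable {W : FunctorClass.{u}} {A A' A'' B B' B'' : Type u}
  [SmallCategory A] [SmallCategory A'] [SmallCategory A'']
  [SmallCategory B] [SmallCategory B'] [SmallCategory B'']
  {u : A ⥤ B} {u' : A' ⥤ B'} {u'' : A'' ⥤ B''}
  {v : A' ⥤ A} {w : B' ⥤ B} {v' : A'' ⥤ A'} {w' : B'' ⥤ B'}
  (α : v ⋙ u ⟶ u' ⋙ w) (α' : v' ⋙ u' ⟶ u'' ⋙ w')

@[simp]
theorem hcomp2cell_app (a'' : A'') :
    (hcomp2cell α α').app a'' = α.app (v'.obj a'') ≫ w.map (α'.app a'') := rfl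

variable {a : A} {b'' : B''} {g : u.obj a ⟶ (w' ⋙ w).obj b''}

def hcompFiberFunctor :
    SquareFiber u u'' (v' ⋙ v) (w' ⋙ w) (hcomp2cell α α') a b'' g ⥤
      SquareFiber u u' v w α a (w'.obj b'') g where
  obj s := ⟨v'.obj s.pt, s.f, α'.app s.pt ≫ w'.map s.g', by simpa using s.fac⟩
  map {s t} m := ⟨v'.map m.1, m.2.1, by
    have hα' : u'.map (v'.map m.1) ≫ α'.app t.pt = α'.app s.pt ≫ w'.map (u''.map m.1) :=
      α'.naturality m.1
    dsimp only
    rw [← Category.assoc, hα', Category.assoc, ← w'.map_comp, m.2.2]⟩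

variable (ζ : SquareFiber u u' v w α a (w'.obj b'') g)

def hcompFiberCosliceToFiber :
    StructuredArrow ζ (hcompFiberFunctor α α') ⥤ SquareFiber u' u'' v' w' α' ζ.pt b'' ζ.g' where
  obj Z := ⟨Z.right.pt, Z.hom.1, Z.right.g', Z.hom.2.2⟩
  map {Z₁ Z₂} m := ⟨m.right.1, by
      simpa [hcompFiberFunctor] using congrArg Subtype.val (StructuredArrow.w m),
    m.right.2.2⟩

def fiberToHcompFiberCoslice :
    SquareFiber u' u'' v' w' α' ζ.pt b'' ζ.g' ⥤ StructuredArrow ζ (hcompFiberFunctor α α') where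
  obj s := StructuredArrow.mk
    (Y := (⟨s.pt, ζ.f ≫ v.map s.f, s.g', by
      have hα : u.map (v.map s.f) ≫ α.app (v'.obj s.pt) = α.app ζ.pt ≫ w.map (u'.map s.f) :=
        α.naturality s.f
      calc _ = u.map ζ.f ≫ α.app ζ.pt ≫ w.map (u'.map s.f ≫ α'.app s.pt ≫ w'.map s.g') := by
              simp [reassoc_of% hα]
        _ = g := by rw [s.fac, ζ.fac]⟩ :
      SquareFiber u u'' (v' ⋙ v) (w' ⋙ w) (hcomp2cell α α') a b'' g))
    ⟨s.f, rfl, s.fac⟩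
  map {s t} m := StructuredArrow.homMk
    ⟨m.1, by simp only [StructuredArrow.mk_right, Functor.comp_map, Category.assoc,
      ← v.map_comp, m.2.1], m.2.2⟩
    (by ext; simpa [hcompFiberFunctor] using m.2.1)

def hcompFiberCosliceAdjunction :
    hcompFiberCosliceToFiber α α' ζ ⊣ fiberToHcompFiberCoslice α α' ζ :=
  Adjunction.mkOfHomEquiv
    { homEquiv Z s :=
        { toFun m := StructuredArrow.homMk
            ⟨m.1, by
              have hZ : Z.right.f = ζ.f ≫ v.map Z.hom.1 := Z.hom.2.1.symm
              have hm : Z.hom.1 ≫ v'.map m.1 = s.f := m.2.1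
              calc Z.right.f ≫ v.map (v'.map m.1)
                  = ζ.f ≫ v.map (Z.hom.1 ≫ v'.map m.1) := by
                    rw [hZ]; exact (Category.assoc _ _ _).trans (ζ.f ≫= (v.map_comp _ _).symm)
                _ = ζ.f ≫ v.map s.f := by rw [hm],
              m.2.2⟩
            (by ext; exact m.2.1)
          invFun m := ⟨m.right.1, congrArg Subtype.val (StructuredArrow.w m), m.right.2.2⟩
          left_inv _ := rfl
          right_inv _ := rfl }
      homEquiv_naturality_left_symm _ _ := rfl
      homEquiv_naturality_right _ _ := rfl }

variable {α α'} in
theorem IsExactSquare.hcomp (hW : IsWeakFundamentalLocalizer W)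
    (hα : IsExactSquare W u u' v w α) (hα' : IsExactSquare W u' u'' v' w' α') :
    IsExactSquare W u u'' (v' ⋙ v) (w' ⋙ w) (hcomp2cell α α') := by
  refine (isExactSquare_iff_isAsphericalCat_squareFiber hW).2 fun a b'' g => ?_
  have hP : W (hcompFiberFunctor α α' (g := g)) :=
    hW.mem_of_isCoasphericalFunctor fun ζ =>
      hW.isAsphericalCat_of_adjunction (hcompFiberCosliceAdjunction α α' ζ)
        ((isExactSquare_iff_isAsphericalCat_squareFiber hW).1 hα' ζ.pt b'' ζ.g')
  exact hW.isAsphericalCat_of_mem hP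
    ((isExactSquare_iff_isAsphericalCat_squareFiber hW).1 hα a _ g)

end HComp

section VComp

variable {W : FunctorClass.{u}} {A A' B B' C C' : Type u}
  [SmallCategory A] [SmallCategory A'] [SmallCategory B] [SmallCategory B']
  [SmallCategory C] [SmallCategory C']
  {u : A ⥤ B} {u' : A' ⥤ B'} {v : A' ⥤ A} {w : B' ⥤ B}
  {x : B ⥤ C} {x' : B' ⥤ C'} {y : C' ⥤ C}
  (α : v ⋙ u ⟶ u' ⋙ w) (β : w ⋙ x ⟶ x' ⋙ y)

@[simp]
theorem vcomp2cell_app (a' : A') :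
    (vcomp2cell α β).app a' = x.map (α.app a') ≫ β.app (u'.obj a') := rfl

variable {a : A} {c' : C'} {g : (u ⋙ x).obj a ⟶ y.obj c'}

def vcompFiberFunctor :
    SquareFiber (u ⋙ x) (u' ⋙ x') v y (vcomp2cell α β) a c' g ⥤
      SquareFiber x x' w y β (u.obj a) c' g where
  obj s := ⟨u'.obj s.pt, u.map s.f ≫ α.app s.pt, s.g', by simpa using s.fac⟩
  map {s t} m := ⟨u'.map m.1, by
    have hα : u.map (v.map m.1) ≫ α.app t.pt = α.app s.pt ≫ w.map (u'.map m.1) :=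
      α.naturality m.1
    dsimp only
    rw [Category.assoc, ← hα, ← Category.assoc, ← u.map_comp, m.2.1], m.2.2⟩

variable (η : SquareFiber x x' w y β (u.obj a) c' g)

def vcompFiberSliceToFiber :
    CostructuredArrow (vcompFiberFunctor α β) η ⥤ SquareFiber u u' v w α a η.pt η.f where
  obj Z := ⟨Z.left.pt, Z.left.f, Z.hom.1, (Category.assoc _ _ _).symm.trans Z.hom.2.1⟩
  map {Z₁ Z₂} m := ⟨m.left.1, m.left.2.1, congrArg Subtype.val (CostructuredArrow.w m)⟩

def fiberToVcompFiberSlice :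
    SquareFiber u u' v w α a η.pt η.f ⥤ CostructuredArrow (vcompFiberFunctor α β) η where
  obj s := CostructuredArrow.mk
    (Y := (⟨s.pt, s.f, x'.map s.g' ≫ η.g', by
      have hβ : x.map (w.map s.g') ≫ β.app η.pt = β.app (u'.obj s.pt) ≫ y.map (x'.map s.g') :=
        β.naturality s.g'
      calc _ = x.map (u.map s.f ≫ α.app s.pt ≫ w.map s.g') ≫ β.app η.pt ≫ y.map η.g' := by
              simp [reassoc_of% hβ]
        _ = g := by rw [s.fac, η.fac]⟩ :
      SquareFiber (u ⋙ x) (u' ⋙ x') v y (vcomp2cell α β) a c' g))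
    ⟨s.g', (Category.assoc _ _ _).trans s.fac, rfl⟩
  map {s t} m := CostructuredArrow.homMk
    ⟨m.1, m.2.1, (x'.map_comp_assoc _ _ _).symm.trans (congrArg (x'.map · ≫ η.g') m.2.2)⟩
    (by ext; exact m.2.2)

def vcompFiberSliceAdjunction :
    vcompFiberSliceToFiber α β η ⊣ fiberToVcompFiberSlice α β η :=
  Adjunction.mkOfHomEquiv
    { homEquiv Z s :=
        { toFun m := CostructuredArrow.homMk
            ⟨m.1, m.2.1, by
              have hZ : x'.map Z.hom.1 ≫ η.g' = Z.left.g' := Z.hom.2.2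
              have hm : u'.map m.1 ≫ s.g' = Z.hom.1 := m.2.2
              exact (x'.map_comp_assoc _ _ _).symm.trans
                ((congrArg (x'.map · ≫ η.g') hm).trans hZ)⟩
            (by ext; exact m.2.2)
          invFun m := ⟨m.left.1, m.left.2.1, congrArg Subtype.val (CostructuredArrow.w m)⟩
          left_inv _ := rfl
          right_inv _ := rfl }
      homEquiv_naturality_left_symm _ _ := rfl
      homEquiv_naturality_right _ _ := rfl }

variable {α β} in
theorem IsExactSquare.vcomp (hW : IsWeakFundamentalLocalizer W)
    (hα : IsExactSquare W u u' v w α) (hβ : IsExactSquare W x x' w y β) :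
    IsExactSquare W (u ⋙ x) (u' ⋙ x') v y (vcomp2cell α β) := by
  refine (isExactSquare_iff_isAsphericalCat_squareFiber hW).2 fun a c' g => ?_
  have hP : W (vcompFiberFunctor α β (g := g)) :=
    hW.mem_of_isAsphericalFunctor fun η =>
      hW.isAsphericalCat_of_adjunction (vcompFiberSliceAdjunction α β η)
        ((isExactSquare_iff_isAsphericalCat_squareFiber hW).1 hα a η.pt η.f)
  exact hW.isAsphericalCat_of_mem hP
    ((isExactSquare_iff_isAsphericalCat_squareFiber hW).1 hβ _ c' g)

end VComp

theorem statement2 (W : FunctorClass.{u}) (hW : IsWeakFundamentalLocalizer W) :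
    (∀ {A A' A'' B B' B'' : Type u}
      [SmallCategory A] [SmallCategory A'] [SmallCategory A'']
      [SmallCategory B] [SmallCategory B'] [SmallCategory B'']
      (u : A ⥤ B) (u' : A' ⥤ B') (u'' : A'' ⥤ B'')
      (v : A' ⥤ A) (w : B' ⥤ B) (v' : A'' ⥤ A') (w' : B'' ⥤ B')
      (α : v ⋙ u ⟶ u' ⋙ w) (α' : v' ⋙ u' ⟶ u'' ⋙ w'),
      IsExactSquare W u u' v w α → IsExactSquare W u' u'' v' w' α' →
      IsExactSquare W u u'' (v' ⋙ v) (w' ⋙ w) (hcomp2cell α α'))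
    ∧ (∀ {A A' B B' C C' : Type u}
      [SmallCategory A] [SmallCategory A'] [SmallCategory B] [SmallCategory B']
      [SmallCategory C] [SmallCategory C']
      (u : A ⥤ B) (u' : A' ⥤ B') (v : A' ⥤ A) (w : B' ⥤ B)
      (x : B ⥤ C) (x' : B' ⥤ C') (y : C' ⥤ C)
      (α : v ⋙ u ⟶ u' ⋙ w) (β : w ⋙ x ⟶ x' ⋙ y),
      IsExactSquare W u u' v w α → IsExactSquare W x x' w y β →
      IsExactSquare W (u ⋙ x) (u' ⋙ x') v y (vcomp2cell α β)) :=
  ⟨fun _ _ _ _ _ _ _ _ _ hα hα' => hα.hcomp hW hα',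
    fun _ _ _ _ _ _ _ _ _ hα hβ => hα.vcomp hW hβ⟩

end Paper
end

section
/- Let D be a square in Cat, given by u : A → B, u' : A' → B', v : A' → A, w : B' → B and α : u ∘ v ⟶ w ∘ u', such that u and u' admit right adjoints. The following conditions are equivalent: (a) D is a left Beck–Chevalley square, i.e., the base-change morphism c : v ∘ r' ⟶ r ∘ w (where r, r' are right adjoints of u, u') is an isomorphism; (c) D is Guitart exact, i.e., for every object a of A, every object b' of B' and every morphism g : u(a) → w(b'), the category A'_{(a,b',g)} is connected (nonempty with any two objects joined by a zigzag of morphisms); (d) for every object a of A, the induced functor a\A' → u(a)\B' admits a right adjoint; (e) for every a, b', g as in (c), the category A'_{(a,b',g)} has a terminal object. -/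
open CategoryTheory

universe u

namespace Paper

/-!
By the Yoneda lemma and the transposition `u a ⟶ w b' ≃ a ⟶ r (w b')`, the base-change morphism
`c` is invertible iff every map `φ : (a ⟶ v (r' b')) → (u a ⟶ w b')`, `f ↦ w ε' ∘ α ∘ u f`,
is bijective. In the fibre `A'_{(a,b',g)}` the objects `(r' b', f, ε'_{b'})` with `φ f = g`
receive at most one map from any object `(a', f, g')`, namely the transpose `g'♭ : a' ⟶ r' b'`,
and it exists iff `v g'♭ ∘ f` equals the given `f`; moreover `v g'♭ ∘ f` is invariant along
morphisms of the fibre. So bijectivity of `φ` gives terminal objects in the fibres, and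
connectedness of the fibres gives bijectivity. Finally the comma category of
`a\A' ⥤ u(a)\B'` over `(b', g)` is the fibre `A'_{(a,b',g)}`, so the existence of a right
adjoint amounts to terminal objects in all fibres.
-/

open Limits

section BaseChange

variable {A A' B B' : Type u} [SmallCategory A] [SmallCategory A']
  [SmallCategory B] [SmallCategory B'] {u : A ⥤ B} {u' : A' ⥤ B'} {v : A' ⥤ A}
  {w : B' ⥤ B} (α : v ⋙ u ⟶ u' ⋙ w) {r' : B' ⥤ A'} (adj' : u' ⊣ r')

def baseChangeTranspose (a : A) (b' : B') (f : a ⟶ v.obj (r'.obj b')) : u.obj a ⟶ w.obj b' :=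
  u.map f ≫ α.app (r'.obj b') ≫ w.map (adj'.counit.app b')

theorem homEquiv_baseChangeTranspose {r : B ⥤ A} (adj : u ⊣ r) (a : A) (b' : B')
    (f : a ⟶ v.obj (r'.obj b')) :
    adj.homEquiv a (w.obj b') (baseChangeTranspose α adj' a b' f) =
      f ≫ (baseChangeR adj adj' α).app b' := by
  simp [baseChangeTranspose, baseChangeR, Adjunction.homEquiv_unit]

theorem isIso_baseChangeR_iff_bijective {r : B ⥤ A} (adj : u ⊣ r) :
    IsIso (baseChangeR adj adj' α) ↔
      ∀ (a : A) (b' : B'), Function.Bijective (baseChangeTranspose α adj' a b') := by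
  have hcomp (a : A) (b' : B') : (· ≫ (baseChangeR adj adj' α).app b') =
      adj.homEquiv a (w.obj b') ∘ baseChangeTranspose α adj' a b' :=
    funext fun f => (homEquiv_baseChangeTranspose α adj' adj a b' f).symm
  rw [NatTrans.isIso_iff_isIso_app, forall_comm]
  simp only [isIso_iff_yoneda_map_bijective, hcomp, (Equiv.bijective _).of_comp_iff']

namespace SquareFiber

variable {α} {a : A} {b' : B'} {g : u.obj a ⟶ w.obj b'}

def ofCounit (f : a ⟶ v.obj (r'.obj b')) (hf : baseChangeTranspose α adj' a b' f = g) :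
    SquareFiber u u' v w α a b' g :=
  ⟨r'.obj b', f, adj'.counit.app b', hf⟩

def toCounit (X : SquareFiber u u' v w α a b' g) : a ⟶ v.obj (r'.obj b') :=
  X.f ≫ v.map (adj'.homEquiv _ _ X.g')

theorem baseChangeTranspose_toCounit (X : SquareFiber u u' v w α a b' g) :
    baseChangeTranspose α adj' a b' (X.toCounit adj') = g := by
  have hnat := α.naturality (adj'.homEquiv _ _ X.g')
  dsimp at hnat
  simp only [baseChangeTranspose, toCounit, Functor.map_comp, Category.assoc]
  rw [reassoc_of% hnat, ← w.map_comp, ← Adjunction.homEquiv_counit, Equiv.symm_apply_apply]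
  exact X.fac

theorem toCounit_ofCounit (f : a ⟶ v.obj (r'.obj b'))
    (hf : baseChangeTranspose α adj' a b' f = g) :
    (ofCounit adj' f hf).toCounit adj' = f := by
  change f ≫ v.map (adj'.homEquiv _ _ (adj'.counit.app b')) = f
  simp [Adjunction.homEquiv_unit]

theorem toCounit_eq_of_hom {X Y : SquareFiber u u' v w α a b' g} (h : X ⟶ Y) :
    X.toCounit adj' = Y.toCounit adj' := by
  obtain ⟨h, hf, hg'⟩ := h
  rw [toCounit, toCounit, ← hf, ← hg', Adjunction.homEquiv_naturality_left, Functor.map_comp,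
    Category.assoc]

theorem hom_ofCounit_eq {X : SquareFiber u u' v w α a b' g} {f : a ⟶ v.obj (r'.obj b')}
    {hf : baseChangeTranspose α adj' a b' f = g} (m : X ⟶ ofCounit adj' f hf) :
    m.1 = adj'.homEquiv _ _ X.g' := by
  obtain ⟨m, -, hm⟩ := m
  exact (adj'.homEquiv _ _).symm_apply_eq.1 ((adj'.homEquiv_counit _ _ _).trans hm)

def isTerminalOfCounit (hinj : Function.Injective (baseChangeTranspose α adj' a b'))
    (f : a ⟶ v.obj (r'.obj b')) (hf : baseChangeTranspose α adj' a b' f = g) :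
    IsTerminal (ofCounit adj' f hf) :=
  IsTerminal.ofUniqueHom (fun X => ⟨adj'.homEquiv _ _ X.g',
      hinj ((X.baseChangeTranspose_toCounit adj').trans hf.symm),
      (adj'.homEquiv_counit _ _ _).symm.trans ((adj'.homEquiv _ _).symm_apply_apply _)⟩)
    (fun _ m => Subtype.ext (hom_ofCounit_eq adj' m))

end SquareFiber

section Fibers

variable {α} {a : A} {b' : B'}

theorem hasTerminal_squareFiber_of_bijective
    (h : Function.Bijective (baseChangeTranspose α adj' a b')) (g : u.obj a ⟶ w.obj b') :
    HasTerminal (SquareFiber u u' v w α a b' g) := by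
  obtain ⟨f, hf⟩ := h.2 g
  exact (SquareFiber.isTerminalOfCounit adj' h.1 f hf).hasTerminal

theorem bijective_baseChangeTranspose_of_isConnected
    (h : ∀ g : u.obj a ⟶ w.obj b', IsConnected (SquareFiber u u' v w α a b' g)) :
    Function.Bijective (baseChangeTranspose α adj' a b') := by
  refine ⟨fun f₁ f₂ hf => ?_, fun g => ?_⟩
  · have := h (baseChangeTranspose α adj' a b' f₁)
    simpa only [SquareFiber.toCounit_ofCounit] using
      constant_of_preserves_morphisms (SquareFiber.toCounit adj')
        (fun _ _ => SquareFiber.toCounit_eq_of_hom adj')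
        (SquareFiber.ofCounit adj' f₁ rfl) (SquareFiber.ofCounit adj' f₂ hf.symm)
  · obtain ⟨X⟩ := (h g).is_nonempty
    exact ⟨X.toCounit adj', X.baseChangeTranspose_toCounit adj'⟩

end Fibers

def costructuredArrowSquareCosliceEquiv (a : A) (Y : StructuredArrow (u.obj a) w) :
    CostructuredArrow (squareCoslice u u' v w α a) Y ≌
      SquareFiber u u' v w α a Y.right Y.hom :=
  CategoryTheory.Equivalence.mk
    { obj := fun P => ⟨P.left.right, P.left.hom, P.hom.right, by
        simpa [squareCoslice] using StructuredArrow.w P.hom⟩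
      map := fun m => ⟨m.left.right, by simp, by
        simpa [squareCoslice] using congrArg CommaMorphism.right (CostructuredArrow.w m)⟩
      map_id := fun _ => rfl
      map_comp := fun _ _ => rfl }
    { obj := fun Z => CostructuredArrow.mk (Y := StructuredArrow.mk Z.f)
        (StructuredArrow.homMk Z.g' (by simpa [squareCoslice] using Z.fac))
      map := fun h => CostructuredArrow.homMk (StructuredArrow.homMk h.1 h.2.1)
        (StructuredArrow.hom_ext _ _ h.2.2)
      map_id := fun _ => rfl
      map_comp := fun _ _ => rfl }
    (NatIso.ofComponents (fun _ => Iso.refl _) fun _ => by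
      ext
      simp)
    (NatIso.ofComponents (fun _ => Iso.refl _) fun _ => Subtype.ext (by simp))

theorem isLeftAdjoint_squareCoslice_iff (a : A) :
    (squareCoslice u u' v w α a).IsLeftAdjoint ↔
      ∀ (b' : B') (g : u.obj a ⟶ w.obj b'), HasTerminal (SquareFiber u u' v w α a b' g) := by
  rw [isLeftAdjoint_iff_hasTerminal_costructuredArrow]
  exact ⟨fun h b' g => (costructuredArrowSquareCosliceEquiv α a
    (StructuredArrow.mk g)).hasTerminal_iff.1 (h _),
    fun h Y => (costructuredArrowSquareCosliceEquiv α a Y).hasTerminal_iff.2 (h _ _)⟩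

end BaseChange

theorem statement8 {A A' B B' : Type u} [SmallCategory A] [SmallCategory A']
    [SmallCategory B] [SmallCategory B'] (u : A ⥤ B) (u' : A' ⥤ B') (v : A' ⥤ A)
    (w : B' ⥤ B) (α : v ⋙ u ⟶ u' ⋙ w)
    (r : B ⥤ A) (r' : B' ⥤ A') (adj : u ⊣ r) (adj' : u' ⊣ r') :
    (IsIso (baseChangeR adj adj' α) ↔
        ∀ (a : A) (b' : B') (g : u.obj a ⟶ w.obj b'),
          IsConnected (SquareFiber u u' v w α a b' g))
      ∧ (IsIso (baseChangeR adj adj' α) ↔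
        ∀ a : A, (squareCoslice u u' v w α a).IsLeftAdjoint)
      ∧ (IsIso (baseChangeR adj adj' α) ↔
        ∀ (a : A) (b' : B') (g : u.obj a ⟶ w.obj b'),
          Limits.HasTerminal (SquareFiber u u' v w α a b' g)) := by
  have h : List.TFAE [IsIso (baseChangeR adj adj' α),
      ∀ (a : A) (b' : B'), Function.Bijective (baseChangeTranspose α adj' a b'),
      ∀ (a : A) (b' : B') (g : u.obj a ⟶ w.obj b'),
        IsConnected (SquareFiber u u' v w α a b' g),
      ∀ a : A, (squareCoslice u u' v w α a).IsLeftAdjoint,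
      ∀ (a : A) (b' : B') (g : u.obj a ⟶ w.obj b'),
        HasTerminal (SquareFiber u u' v w α a b' g)] := by
    tfae_have 1 ↔ 2 := isIso_baseChangeR_iff_bijective α adj' adj
    tfae_have 2 → 5 := fun h a b' => hasTerminal_squareFiber_of_bijective adj' (h a b')
    tfae_have 5 → 3 := fun h a b' g =>
      have := h a b' g
      isConnected_of_hasTerminal _
    tfae_have 3 → 2 := fun h a b' => bijective_baseChangeTranspose_of_isConnected adj' (h a b')
    tfae_have 4 ↔ 5 := forall_congr' (isLeftAdjoint_squareCoslice_iff α)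
    tfae_finish
  exact ⟨h.out 0 2, h.out 0 3, h.out 0 4⟩

end Paper
end

section
/- Let W be a weak fundamental localizer and Q a class of squares in Cat satisfying CS1h (stability under horizontal composition), CS2h (horizontal descent), CI2g (all comma squares D^g_{u,b} of a functor at an object are in Q), and CI1d (for every W-coaspherical functor u : A → B, the square with top u, left A → e, right B → e, bottom id_e, identity 2-cell, is in Q). Then Q contains every cartesian square (commutative square with A' ≅ B' ×_B A) whose right edge u : A → B is W-proper. Respectively, if CI1d is replaced by CI1'd (the same squares but for u admitting a left adjoint), then Q contains every cartesian square whose right edge u is a precofibration. -/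
open CategoryTheory

universe u

namespace Paper

/-!
Two horizontal descents (CS2h). First descend along the comma squares of
`pbFst : B' ×_B A ⥤ B'` at the objects `b'` (in `Q` by CI2g); then, inside the comma square at
`b'`, along `A_{w b'} ⥤ (B' ×_B A)/b'`, `a ↦ ((b', a), 𝟙)`, whose star square is in `Q` by CI1d
(resp. CI1'd): its coslices are equivalent to those of `A_{w b'} ⥤ A/(w b')`, so it is
coaspherical (resp. a right adjoint) when `u` is proper (resp. a precofibration). What is left is
the square `A_{w b'} ⥤ A` over `w b' : e ⥤ B`, the composite (CS1h) of the comma square of `u` at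
`w b'` with the star square of `A_{w b'} ⥤ A/(w b')`. Asphericity is invariant under
equivalences because a weak fundamental localizer contains every left adjoint.
-/

namespace IsWeakFundamentalLocalizer

variable {W : FunctorClass.{u}} {X Y : Type u} [SmallCategory X] [SmallCategory Y]

/-- The slices `X/y` of a left adjoint have terminal objects, as do the `Over y`. -/
lemma mem_of_isLeftAdjoint (hW : IsWeakFundamentalLocalizer W) (F : X ⥤ Y)
    [F.IsLeftAdjoint] : W F := by
  refine hW.mem_of_slices F fun y => hW.of_comp_right _ (Functor.star (Over y)) ?_ ?_
  · exact hW.star_mem _ Over.mkIdTerminal.hasTerminal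
  · rw [Functor.punit_ext' (sliceInduced F y ⋙ _) (Functor.star _)]
    exact hW.star_mem _ (isLeftAdjoint_iff_hasTerminal_costructuredArrow.mp ‹_› y)

lemma isAsphericalCat_of_equivalence_s17 (hW : IsWeakFundamentalLocalizer W) (e : X ≌ Y)
    (hX : IsAsphericalCat W X) : IsAsphericalCat W Y := by
  refine hW.of_comp_left e.functor _ (hW.mem_of_isLeftAdjoint _) ?_
  rwa [Functor.punit_ext' (e.functor ⋙ _) (Functor.star X)]

end IsWeakFundamentalLocalizer

/-- Bijections `(obj y' ⟶ F x) ≃ (y' ⟶ F' x)` natural in `x`; they identify the coslice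
`y'\F'` with `(obj y')\F`. -/
structure CosliceComparison {X Y Y' : Type*} [Category X] [Category Y] [Category Y']
    (F : X ⥤ Y) (F' : X ⥤ Y') where
  obj : Y' → Y
  homEquiv : ∀ y' x, (obj y' ⟶ F.obj x) ≃ (y' ⟶ F'.obj x)
  homEquiv_naturality : ∀ y' {x x'} (t : obj y' ⟶ F.obj x) (r : x ⟶ x'),
    homEquiv y' x' (t ≫ F.map r) = homEquiv y' x t ≫ F'.map r

namespace CosliceComparison

section

variable {X Y Y' : Type*} [Category X] [Category Y] [Category Y'] {F : X ⥤ Y} {F' : X ⥤ Y'}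
  (c : CosliceComparison F F')

lemma homEquiv_symm_naturality (y' : Y') {x x' : X} (s : y' ⟶ F'.obj x) (r : x ⟶ x') :
    (c.homEquiv y' x').symm (s ≫ F'.map r) = (c.homEquiv y' x).symm s ≫ F.map r := by
  rw [Equiv.symm_apply_eq, c.homEquiv_naturality, Equiv.apply_symm_apply]

def cosliceFunctor (y' : Y') : StructuredArrow (c.obj y') F ⥤ StructuredArrow y' F' where
  obj o := StructuredArrow.mk (c.homEquiv y' o.right o.hom)
  map r := StructuredArrow.homMk r.right (by simp [← c.homEquiv_naturality])

def cosliceInverse (y' : Y') : StructuredArrow y' F' ⥤ StructuredArrow (c.obj y') F where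
  obj o := StructuredArrow.mk ((c.homEquiv y' o.right).symm o.hom)
  map r := StructuredArrow.homMk r.right (by simp [← c.homEquiv_symm_naturality])

def cosliceEquivalence (y' : Y') : StructuredArrow (c.obj y') F ≌ StructuredArrow y' F' :=
  .mk (c.cosliceFunctor y') (c.cosliceInverse y')
    (NatIso.ofComponents
      (fun o => StructuredArrow.isoMk (Iso.refl _) (by simp [cosliceFunctor, cosliceInverse]))
      (fun f => by ext; simp [cosliceFunctor, cosliceInverse]))
    (NatIso.ofComponents
      (fun o => StructuredArrow.isoMk (Iso.refl _) (by simp [cosliceFunctor, cosliceInverse]))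
      (fun f => by ext; simp [cosliceFunctor, cosliceInverse]))

lemma isRightAdjoint (c : CosliceComparison F F') [F.IsRightAdjoint] : F'.IsRightAdjoint :=
  isRightAdjoint_iff_hasInitial_structuredArrow.mpr fun y' =>
    (c.cosliceEquivalence y').hasInitial_iff.mp
      (isRightAdjoint_iff_hasInitial_structuredArrow.mp ‹_› (c.obj y'))

end

lemma isCoasphericalFunctor {W : FunctorClass.{u}} (hW : IsWeakFundamentalLocalizer W)
    {X Y Y' : Type u} [SmallCategory X] [SmallCategory Y] [SmallCategory Y']
    {F : X ⥤ Y} {F' : X ⥤ Y'} (c : CosliceComparison F F')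
    (hF : IsCoasphericalFunctor W F) : IsCoasphericalFunctor W F' :=
  fun y' => hW.isAsphericalCat_of_equivalence_s17 (c.cosliceEquivalence y') (hF (c.obj y'))

end CosliceComparison

section FiberSlices

variable {A B B' : Type u} [SmallCategory A] [SmallCategory B] [SmallCategory B']

/-- `fiberToSlice u b` with `A/b` modelled as `Comma u (Functor.fromPUnit.{u} b)`, the
top-left corner of `commaObjSquare u b`. -/
@[simps]
def fiberToCommaSlice (u : A ⥤ B) (b : B) : CatFiber u b ⥤ Comma u (Functor.fromPUnit.{u} b) where
  obj x := ⟨x.obj, ⟨⟨⟩⟩, eqToHom x.eq⟩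
  map f := ⟨f.1, 𝟙 _, by simp [f.2]⟩

def fiberToCommaSliceComparison (u : A ⥤ B) (b : B) :
    CosliceComparison (fiberToSlice u b) (fiberToCommaSlice u b) where
  obj z := CostructuredArrow.mk z.hom
  homEquiv z x :=
    { toFun t := ⟨t.left, 𝟙 _, (CostructuredArrow.w t).trans (Category.comp_id _).symm⟩
      invFun s := CostructuredArrow.homMk s.left (s.w.trans (Category.comp_id _))
      left_inv t := by ext; rfl
      right_inv s := by ext; exacts [rfl, Subsingleton.elim _ _] }
  homEquiv_naturality z x x' t r := by ext; exacts [rfl, Subsingleton.elim _ _]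

end FiberSlices

section PullbackSlices

variable {A B B' : Type u} [SmallCategory A] [SmallCategory B] [SmallCategory B']
  (u : A ⥤ B) (w : B' ⥤ B) (b' : B')

def fiberToPullbackSlice :
    CatFiber u (w.obj b') ⥤ Comma (pbFst u w) (Functor.fromPUnit.{u} b') where
  obj x := ⟨⟨b', x.obj, x.eq.symm⟩, ⟨⟨⟩⟩, 𝟙 b'⟩
  map f := ⟨⟨(𝟙 b', f.1), by simp [f.2]⟩, 𝟙 _, by simp [pbFst]⟩
  map_id x := by ext; exacts [Subtype.ext rfl, Subsingleton.elim _ _]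
  map_comp f g := by
    ext; exacts [Subtype.ext (Prod.ext (Category.comp_id _).symm rfl), Subsingleton.elim _ _]

lemma fiberToPullbackSlice_hom_fst {z : Comma (pbFst u w) (Functor.fromPUnit.{u} b')}
    {x : CatFiber u (w.obj b')} (s : z ⟶ (fiberToPullbackSlice u w b').obj x) :
    s.left.1.1 = z.hom :=
  (Category.comp_id _).symm.trans (s.w.trans (Category.comp_id _))

/-- A morphism from `z = ((b₀, a), g : b₀ ⟶ b')` to `((b', x), 𝟙 b')` is determined by its
component `a ⟶ x`, which is a morphism over `w b'` in `A/(w b')`. -/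
def fiberToPullbackSliceComparison :
    CosliceComparison (fiberToSlice u (w.obj b')) (fiberToPullbackSlice u w b') where
  obj z := CostructuredArrow.mk (eqToHom z.left.eq.symm ≫ w.map z.hom)
  homEquiv z x :=
    { toFun t := ⟨⟨(z.hom, t.left), by
          have h := CostructuredArrow.w t
          dsimp [fiberToSlice] at h ⊢
          rw [comp_eqToHom_iff, Category.assoc]
          erw [h, eqToHom_trans_assoc, eqToHom_refl, Category.id_comp]
          rfl⟩, 𝟙 _, rfl⟩
      invFun s := CostructuredArrow.homMk s.left.1.2 (by
        have h := s.left.2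
        dsimp [fiberToSlice] at h ⊢
        rw [fiberToPullbackSlice_hom_fst] at h
        have h' : u.map s.left.1.2 = eqToHom z.left.eq.symm ≫ w.map z.hom ≫
            eqToHom x.eq.symm := by erw [h, eqToHom_trans_assoc, eqToHom_refl, Category.id_comp]
        erw [h', Category.assoc, Category.assoc, eqToHom_trans, eqToHom_refl, Category.comp_id])
      left_inv t := by ext; rfl
      right_inv s := by
        ext
        · exact Subtype.ext (Prod.ext (fiberToPullbackSlice_hom_fst u w b' s).symm rfl)
        · exact Subsingleton.elim _ _ }
  homEquiv_naturality z x x' t r := by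
    ext
    · exact Subtype.ext (Prod.ext (Category.comp_id _).symm rfl)
    · exact Subsingleton.elim _ _

end PullbackSlices

section SquareCongr

variable (Q : CatSquare.{u} → Prop)

def IsEqToHomNat {X Y : Type u} [SmallCategory X] [SmallCategory Y] {F G : X ⥤ Y}
    (α : F ⟶ G) : Prop :=
  ∀ x, ∃ p : F.obj x = G.obj x, α.app x = eqToHom p

lemma isEqToHomNat_eqToHom {X Y : Type u} [SmallCategory X] [SmallCategory Y]
    {F G : X ⥤ Y} (h : F = G) : IsEqToHomNat (eqToHom h) :=
  fun x => ⟨Functor.congr_obj h x, eqToHom_app h x⟩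

lemma mem_congr_of_isEqToHomNat {A' A B' B : Type u}
    [SmallCategory A'] [SmallCategory A] [SmallCategory B'] [SmallCategory B]
    {u₁ u₂ : A ⥤ B} {u'₁ u'₂ : A' ⥤ B'} {v₁ v₂ : A' ⥤ A} {w₁ w₂ : B' ⥤ B}
    {α₁ : v₁ ⋙ u₁ ⟶ u'₁ ⋙ w₁} {α₂ : v₂ ⋙ u₂ ⟶ u'₂ ⋙ w₂}
    (hu : u₁ = u₂) (hu' : u'₁ = u'₂) (hv : v₁ = v₂) (hw : w₁ = w₂)
    (h₁ : IsEqToHomNat α₁) (h₂ : IsEqToHomNat α₂)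
    (hQ : Q ⟨u₁, u'₁, v₁, w₁, α₁⟩) : Q ⟨u₂, u'₂, v₂, w₂, α₂⟩ := by
  subst hu hu' hv hw
  obtain rfl : α₁ = α₂ := by
    ext x
    obtain ⟨_, e₁⟩ := h₁ x
    obtain ⟨_, e₂⟩ := h₂ x
    rw [e₁, e₂]
  exact hQ

lemma mem_of_mem_starSquare {A B : Type u} [SmallCategory A] [SmallCategory B] (F : A ⥤ B)
    (G : B ⥤ PtCat.{u}) (α : F ⋙ G ⟶ Functor.star A ⋙ 𝟭 PtCat.{u})
    (hQ : Q (starSquare F)) : Q ⟨G, Functor.star A, F, 𝟭 PtCat.{u}, α⟩ := by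
  obtain rfl := Functor.punit_ext' G (Functor.star B)
  obtain rfl : α = 𝟙 _ := by ext; exact Subsingleton.elim _ _
  exact hQ

end SquareCongr

section Descent

variable {Q : CatSquare.{u} → Prop} {A B B' : Type u} [SmallCategory A] [SmallCategory B]
  [SmallCategory B']

def catFiberIncl (u : A ⥤ B) (b : B) : CatFiber u b ⥤ A where
  obj x := x.obj
  map f := f.1

lemma catFiberIncl_comp (u : A ⥤ B) (b : B) :
    catFiberIncl u b ⋙ u = Functor.star (CatFiber u b) ⋙ Functor.fromPUnit.{u} b :=
  CategoryTheory.Functor.ext CatFiber.eq fun x y f => by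
    simp [catFiberIncl, f.2]
    erw [eqToHom_trans]

def fiberSquare (u : A ⥤ B) (b : B) : CatSquare.{u} :=
  ⟨u, Functor.star (CatFiber u b), catFiberIncl u b, Functor.fromPUnit.{u} b,
    eqToHom (catFiberIncl_comp u b)⟩

def pullbackSquare (u : A ⥤ B) (w : B' ⥤ B) : CatSquare.{u} :=
  ⟨u, pbFst u w, pbSnd u w, w, eqToHom (pb_comm u w)⟩

/-- `fiberSquare u b` is the horizontal composite of `commaObjSquare u b` with
`starSquare (fiberToCommaSlice u b)`. -/
lemma mem_fiberSquare (cs1h : StableHComp Q)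
    (ci2g : ∀ {A B : Type u} [SmallCategory A] [SmallCategory B] (F : A ⥤ B) (b : B),
      Q (commaObjSquare F b))
    (u : A ⥤ B) (b : B) (hm : Q (starSquare (fiberToCommaSlice u b))) :
    Q (fiberSquare u b) := by
  refine mem_congr_of_isEqToHomNat Q rfl rfl rfl rfl ?_ (isEqToHomNat_eqToHom _)
    (cs1h _ _ _ _ _ _ _ _ (eqToHom (Functor.punit_ext' _ _)) (ci2g u b)
      (mem_of_mem_starSquare Q _ _ _ hm))
  exact fun x => ⟨x.eq, by simp [hcomp2cell, eqToHom_app]; exact Category.comp_id _⟩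

/-- Descend first along the comma squares of `pbFst u w` at the objects `b'` of `B'`, then
along the functor `A_{w b'} ⥤ (B' ×_B A)/b'`: what remains is `fiberSquare u (w b')`. -/
lemma mem_pullbackSquare (cs2h : HorizontalDescent Q)
    (ci2g : ∀ {A B : Type u} [SmallCategory A] [SmallCategory B] (F : A ⥤ B) (b : B),
      Q (commaObjSquare F b))
    (u : A ⥤ B) (w : B' ⥤ B) (hk : ∀ b', Q (starSquare (fiberToPullbackSlice u w b')))
    (hfib : ∀ b', Q (fiberSquare u (w.obj b'))) : Q (pullbackSquare u w) := by
  refine cs2h _ _ _ _ _ B' (fun b' => Comma (pbFst u w) (Functor.fromPUnit.{u} b'))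
    (fun _ => PtCat.{u}) (fun _ => Comma.snd _ _) (fun _ => Comma.fst _ _)
    (fun b' => Functor.fromPUnit.{u} b') (fun _ => Comma.natTrans _ _)
    (fun b' => ⟨b', ⟨⟨⟩⟩, rfl⟩) (fun b' => ci2g _ b') fun b' => ?_
  refine cs2h _ _ _ _ _ PUnit.{u + 1} (fun _ => CatFiber u (w.obj b')) (fun _ => PtCat.{u})
    (fun _ => Functor.star _) (fun _ => fiberToPullbackSlice u w b') (fun _ => 𝟭 _)
    (fun _ => eqToHom (Functor.punit_ext' _ _)) (fun p => ⟨⟨⟩, p, rfl⟩)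
    (fun _ => mem_of_mem_starSquare Q _ _ _ (hk b')) fun _ => ?_
  refine mem_congr_of_isEqToHomNat Q rfl rfl rfl ?_ (isEqToHomNat_eqToHom _) ?_ (hfib b')
  · exact CategoryTheory.Functor.ext (fun _ => rfl) (fun _ _ _ => by simp)
  · refine fun x => ⟨x.eq, ?_⟩
    simp [hcomp2cell, eqToHom_app]
    erw [w.map_id, Category.comp_id]
    rfl

end Descent

lemma mem_of_isCatIso_toPullback (Q : CatSquare.{u} → Prop)
    (hiso : ∀ S T : CatSquare.{u}, S.Isomorphic T → Q S → Q T)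
    {A A' B B' : Type u} [SmallCategory A] [SmallCategory A'] [SmallCategory B]
    [SmallCategory B'] (u : A ⥤ B) (u' : A' ⥤ B') (v : A' ⥤ A) (w : B' ⥤ B)
    (h : v ⋙ u = u' ⋙ w) (hIso : IsCatIso (toPullback u u' v w h))
    (hQ : Q (pullbackSquare u w)) : Q ⟨u, u', v, w, eqToHom h⟩ := by
  unfold pullbackSquare at hQ
  obtain ⟨ρ, hρ₁, hρ₂⟩ := hIso
  have hv : pbSnd u w ⋙ 𝟭 A = ρ ⋙ v := by
    rw [Functor.comp_id, ← Functor.id_comp (pbSnd u w), ← hρ₂]; rfl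
  have hu' : pbFst u w ⋙ 𝟭 B' = ρ ⋙ u' := by
    rw [Functor.comp_id, ← Functor.id_comp (pbFst u w), ← hρ₂]; rfl
  refine hiso _ _ ⟨ρ, 𝟭 A, 𝟭 B', 𝟭 B, ⟨toPullback u u' v w h, hρ₂, hρ₁⟩, ⟨𝟭 A, rfl, rfl⟩,
    ⟨𝟭 B', rfl, rfl⟩, ⟨𝟭 B, rfl, rfl⟩, hv, rfl, hu', rfl, ?_⟩ hQ
  ext x
  simp [eqToHom_app]

theorem statement17 (W : FunctorClass.{u}) (hW : IsWeakFundamentalLocalizer W)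
    (Q : CatSquare.{u} → Prop)
    (hiso : ∀ S T : CatSquare.{u}, S.Isomorphic T → Q S → Q T)
    (cs1h : StableHComp Q)
    (cs2h : HorizontalDescent Q)
    (ci2g : ∀ {A B : Type u} [SmallCategory A] [SmallCategory B] (F : A ⥤ B) (b : B),
      Q (commaObjSquare F b)) :
    ((∀ {A B : Type u} [SmallCategory A] [SmallCategory B] (F : A ⥤ B),
        IsCoasphericalFunctor W F → Q (starSquare F)) →
      ∀ {A A' B B' : Type u} [SmallCategory A] [SmallCategory A'] [SmallCategory B]
        [SmallCategory B'] (u : A ⥤ B) (u' : A' ⥤ B') (v : A' ⥤ A) (w : B' ⥤ B)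
        (h : v ⋙ u = u' ⋙ w), IsCatIso (toPullback u u' v w h) → IsProper W u →
        Q ⟨u, u', v, w, eqToHom h⟩)
    ∧ ((∀ {A B : Type u} [SmallCategory A] [SmallCategory B] (F : A ⥤ B),
        F.IsRightAdjoint → Q (starSquare F)) →
      ∀ {A A' B B' : Type u} [SmallCategory A] [SmallCategory A'] [SmallCategory B]
        [SmallCategory B'] (u : A ⥤ B) (u' : A' ⥤ B') (v : A' ⥤ A) (w : B' ⥤ B)
        (h : v ⋙ u = u' ⋙ w), IsCatIso (toPullback u u' v w h) → IsPrecofibration u →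
        Q ⟨u, u', v, w, eqToHom h⟩) := by
  constructor
  · intro ci1d A A' B B' _ _ _ _ u u' v w h hIso hu
    refine mem_of_isCatIso_toPullback Q hiso u u' v w h hIso
      (mem_pullbackSquare cs2h ci2g u w (fun b' => ci1d _ ?_) fun b' =>
        mem_fiberSquare cs1h ci2g u _ (ci1d _ ?_))
    · exact (fiberToPullbackSliceComparison u w b').isCoasphericalFunctor hW (hu _)
    · exact (fiberToCommaSliceComparison u _).isCoasphericalFunctor hW (hu _)
  · intro ci1d A A' B B' _ _ _ _ u u' v w h hIso hu
    refine mem_of_isCatIso_toPullback Q hiso u u' v w h hIso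
      (mem_pullbackSquare cs2h ci2g u w (fun b' => ci1d _ ?_) fun b' =>
        mem_fiberSquare cs1h ci2g u _ (ci1d _ ?_))
    · have := hu (w.obj b')
      exact (fiberToPullbackSliceComparison u w b').isRightAdjoint
    · have := hu (w.obj b')
      exact (fiberToCommaSliceComparison u _).isRightAdjoint

end Paper
end
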